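/- arXiv:1905.00791 — 7 statements merged into one kernel-verified Lean document; each statement's English description precedes it below -/
import Mathlib

section
/- Let P be a set of n points in the plane in general position (n even) with spread Δ (the ratio of the maximum to the minimum pairwise distance in P). Then for every perfect matching M on P there exists a sequence of at most (2/(2−√2))·n·Δ flips transforming M into a plane perfect matching; in particular f(M) ≤ 2nΔ/(2−√2). -/
open EuclideanGeometry Real

noncomputable section

/-- Points of the Euclidean plane. -/
abbrev Pt : Type := EuclideanSpace ℝ (Fin 2)

/-- Two closed segments `ab` and `cd` on four distinct points *cross* if their open
segments have a common point. -/
def SegCross (a b c d : Pt) : Prop :=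
  a ≠ b ∧ a ≠ c ∧ a ≠ d ∧ b ≠ c ∧ b ≠ d ∧ c ≠ d ∧
    (openSegment ℝ a b ∩ openSegment ℝ c d).Nonempty

/-- `M` is a perfect matching on the point set `P`: a set of non-degenerate unordered
pairs (edges) of points of `P` such that every point of `P` lies in exactly one edge. -/
def IsPM (P : Finset Pt) (M : Set (Sym2 Pt)) : Prop :=
  (∀ e ∈ M, ¬ e.IsDiag) ∧
  (∀ e ∈ M, ∀ p ∈ e, p ∈ P) ∧
  (∀ p ∈ P, ∃! e, e ∈ M ∧ p ∈ e)

/-- Two unordered edges cross. -/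
def EdgeCross (e f : Sym2 Pt) : Prop :=
  ∃ a b c d : Pt, e = s(a, b) ∧ f = s(c, d) ∧ SegCross a b c d

/-- A matching is plane if no two of its edges cross. -/
def PlaneM (M : Set (Sym2 Pt)) : Prop :=
  ∀ e ∈ M, ∀ f ∈ M, ¬ EdgeCross e f

/-- `M'` is obtained from `M` by a single flip: two crossing edges `{a,b}`, `{c,d}`
are replaced by `{a,c}`, `{b,d}` or by `{a,d}`, `{b,c}`. -/
def Flip (M M' : Set (Sym2 Pt)) : Prop :=
  ∃ a b c d : Pt, s(a, b) ∈ M ∧ s(c, d) ∈ M ∧ SegCross a b c d ∧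
    (M' = (M \ {s(a, b), s(c, d)}) ∪ {s(a, c), s(b, d)} ∨
     M' = (M \ {s(a, b), s(c, d)}) ∪ {s(a, d), s(b, c)})

/-- `M` can be transformed into a plane matching by at most `k` flips. -/
def FlipsToPlane (M : Set (Sym2 Pt)) (k : ℕ) : Prop :=
  ∃ (j : ℕ) (g : ℕ → Set (Sym2 Pt)), j ≤ k ∧ g 0 = M ∧
    (∀ i < j, Flip (g i) (g (i + 1))) ∧ PlaneM (g j)

/-- No three distinct points of `P` are collinear. -/
def GenPos (P : Set Pt) : Prop :=
  ∀ p ∈ P, ∀ q ∈ P, ∀ r ∈ P, p ≠ q → p ≠ r → q ≠ r →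
    ¬ Collinear ℝ ({p, q, r} : Set Pt)

/-- `P` is in convex position: no point lies in the convex hull of the others. -/
def ConvexPos (P : Set Pt) : Prop :=
  ∀ p ∈ P, p ∉ convexHull ℝ (P \ {p})

/-!
Flip a crossing pair `ab`, `cd` meeting at `x` into the pair whose edges subtend non-obtuse
angles at `x`. A new edge, say `ac`, is then at most the hypotenuse `√(ax² + cx²)`, and
`√(s² + t²) ≤ s + t - (2 - √2) min(s, t)`; since the two minima add up to at least the
minimum distance `δ` of `P`, the total length drops by at least `(2 - √2) δ`. The length
starts at most `n D`, `D` the diameter, and stays nonnegative, so at most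
`n D / ((2 - √2) δ)` flips occur before the matching is plane.
-/

open scoped RealInnerProductSpace

lemma sub_sqrt_two_pos : 0 < 2 - √2 := by
  linarith [Real.sqrt_two_lt_three_halves]

-- Equality at `s = t`: the hypotenuse of an isosceles right triangle.
lemma sqrt_sq_add_sq_le {s t : ℝ} (hs : 0 ≤ s) (ht : 0 ≤ t) :
    √(s ^ 2 + t ^ 2) ≤ s + t - (2 - √2) * min s t := by
  have h2 : √2 ^ 2 = 2 := Real.sq_sqrt zero_le_two
  have h1 : 1 ≤ √2 := Real.one_le_sqrt.2 one_le_two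
  rw [Real.sqrt_le_iff]
  rcases le_total s t with h | h
  · rw [min_eq_left h]
    constructor <;> nlinarith [mul_le_mul_of_nonneg_left h hs]
  · rw [min_eq_right h]
    constructor <;> nlinarith [mul_le_mul_of_nonneg_left h ht]

section InnerProductSpace

variable {E : Type*} [NormedAddCommGroup E] [InnerProductSpace ℝ E]

lemma dist_sq_le_of_inner_nonneg {p q x : E} (h : 0 ≤ ⟪p - x, q - x⟫) :
    dist p q ^ 2 ≤ dist p x ^ 2 + dist q x ^ 2 := by
  rw [dist_eq_norm, dist_eq_norm, dist_eq_norm, ← sub_sub_sub_cancel_right p q x,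
    norm_sub_sq_real]
  linarith

lemma exists_pos_smul_of_mem_openSegment {a b x : E} (hx : x ∈ openSegment ℝ a b) :
    ∃ t : ℝ, 0 < t ∧ b - x = t • (x - a) := by
  obtain ⟨p, q, hp, hq, hpq, rfl⟩ := hx
  refine ⟨p / q, div_pos hp hq, ?_⟩
  obtain rfl : p = 1 - q := by linarith
  match_scalars <;> field_simp
  ring

lemma inner_nonneg_or_inner_nonneg {a b c d x : E} (hab : x ∈ openSegment ℝ a b)
    (hcd : x ∈ openSegment ℝ c d) :
    (0 ≤ ⟪a - x, c - x⟫ ∧ 0 ≤ ⟪b - x, d - x⟫) ∨ (0 ≤ ⟪a - x, d - x⟫ ∧ 0 ≤ ⟪b - x, c - x⟫) := by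
  obtain ⟨s, hs, hb⟩ := exists_pos_smul_of_mem_openSegment hab
  obtain ⟨t, ht, hd⟩ := exists_pos_smul_of_mem_openSegment hcd
  have ha : a - x = -(x - a) := (neg_sub x a).symm
  have hc : c - x = -(x - c) := (neg_sub x c).symm
  simp only [ha, hb, hc, hd, neg_neg, inner_neg_left, inner_neg_right,
    real_inner_smul_left, real_inner_smul_right]
  rcases le_total 0 ⟪x - a, x - c⟫ with h | h
  · left; constructor <;> positivity
  · right; constructor <;> nlinarith

lemma dist_add_dist_add_le_of_inner_nonneg {a b c d x : E} {δ : ℝ}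
    (hxab : x ∈ segment ℝ a b) (hxcd : x ∈ segment ℝ c d)
    (hac : 0 ≤ ⟪a - x, c - x⟫) (hbd : 0 ≤ ⟪b - x, d - x⟫)
    (hδab : δ ≤ dist a b) (hδad : δ ≤ dist a d) (hδcb : δ ≤ dist c b) (hδcd : δ ≤ dist c d) :
    dist a c + dist b d + (2 - √2) * δ ≤ dist a b + dist c d := by
  have hsplit_ab := dist_add_dist_of_mem_segment hxab
  have hsplit_cd := dist_add_dist_of_mem_segment hxcd
  have hle : ∀ p q : E, 0 ≤ ⟪p - x, q - x⟫ →
      dist p q ≤ dist p x + dist q x - (2 - √2) * min (dist p x) (dist q x) := fun p q h =>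
    (Real.le_sqrt_of_sq_le (dist_sq_le_of_inner_nonneg h)).trans
      (sqrt_sq_add_sq_le dist_nonneg dist_nonneg)
  have hδ_le_min : δ ≤ min (dist a x) (dist c x) + min (dist b x) (dist d x) := by
    have := dist_triangle a x d
    have := dist_triangle c x b
    rw [dist_comm x b, dist_comm x d] at *
    rcases le_total (dist a x) (dist c x) with h | h <;>
      rcases le_total (dist b x) (dist d x) with h' | h' <;>
      simp only [min_eq_left, min_eq_right, h, h'] <;> linarith
  rw [dist_comm x b, dist_comm x d] at *
  nlinarith [hle a c hac, hle b d hbd, sub_sqrt_two_pos]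

lemma exists_dist_add_dist_add_le_of_mem_openSegment {a b c d x : E} {δ : ℝ}
    (hxab : x ∈ openSegment ℝ a b) (hxcd : x ∈ openSegment ℝ c d)
    (hab : δ ≤ dist a b) (hac : δ ≤ dist a c) (had : δ ≤ dist a d)
    (hbc : δ ≤ dist b c) (hbd : δ ≤ dist b d) (hcd : δ ≤ dist c d) :
    dist a c + dist b d + (2 - √2) * δ ≤ dist a b + dist c d ∨
      dist a d + dist b c + (2 - √2) * δ ≤ dist a b + dist c d := by
  have hxab' := openSegment_subset_segment ℝ a b hxab
  have hxcd' := openSegment_subset_segment ℝ c d hxcd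
  rcases inner_nonneg_or_inner_nonneg hxab hxcd with ⟨h₁, h₂⟩ | ⟨h₁, h₂⟩
  · exact .inl <| dist_add_dist_add_le_of_inner_nonneg hxab' hxcd' h₁ h₂ hab had
      (dist_comm c b ▸ hbc) hcd
  · refine .inr ?_
    rw [dist_comm c d]
    exact dist_add_dist_add_le_of_inner_nonneg hxab' (segment_symm ℝ c d ▸ hxcd') h₁ h₂ hab
      hac (dist_comm d b ▸ hbd) (dist_comm c d ▸ hcd)

end InnerProductSpace

lemma distances_finite {α : Type*} [PseudoMetricSpace α] (P : Finset α) :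
    {d : ℝ | ∃ p ∈ P, ∃ q ∈ P, p ≠ q ∧ d = dist p q}.Finite :=
  ((P ×ˢ P).finite_toSet.image fun x => dist x.1 x.2).subset
    (by rintro _ ⟨p, hp, q, hq, -, rfl⟩; exact ⟨(p, q), by simp [hp, hq], rfl⟩)

def edgeLength {α : Type*} [PseudoMetricSpace α] : Sym2 α → ℝ :=
  Sym2.lift ⟨dist, dist_comm⟩

@[simp] lemma edgeLength_mk {α : Type*} [PseudoMetricSpace α] (p q : α) :
    edgeLength s(p, q) = dist p q := rfl

lemma edgeLength_nonneg {α : Type*} [PseudoMetricSpace α] (e : Sym2 α) :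
    0 ≤ edgeLength e := by
  induction e using Sym2.ind with
  | _ p q => exact dist_nonneg

lemma Finset.sum_sdiff_union_add {α β : Type*} [DecidableEq α] [AddCommMonoid β]
    {F N N' : Finset α} (hN : N ⊆ F) (h : Disjoint (F \ N) N') (f : α → β) :
    ∑ x ∈ F \ N ∪ N', f x + ∑ x ∈ N, f x = ∑ x ∈ F, f x + ∑ x ∈ N', f x := by
  rw [sum_union h, add_right_comm, sum_sdiff hN]

lemma isPM_pair {a b c d : Pt} (hab : a ≠ b) (hac : a ≠ c) (had : a ≠ d) (hbc : b ≠ c)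
    (hbd : b ≠ d) (hcd : c ≠ d) : IsPM {a, b, c, d} {s(a, b), s(c, d)} := by
  refine ⟨?_, ?_, ?_⟩
  · rintro e (rfl | rfl) <;> simpa
  · rintro e (rfl | rfl) p hp <;> rcases Sym2.mem_iff.1 hp with rfl | rfl <;> simp
  · intro p hp
    simp only [Finset.mem_insert, Finset.mem_singleton] at hp
    rcases hp with rfl | rfl | rfl | rfl
    · exact ⟨s(p, b), by simp, by rintro e ⟨rfl | rfl, h⟩ <;> aesop⟩
    · exact ⟨s(a, p), by simp, by rintro e ⟨rfl | rfl, h⟩ <;> aesop⟩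
    · exact ⟨s(p, d), by simp, by rintro e ⟨rfl | rfl, h⟩ <;> aesop⟩
    · exact ⟨s(c, p), by simp, by rintro e ⟨rfl | rfl, h⟩ <;> aesop⟩

lemma FlipsToPlane.of_plane {M : Set (Sym2 Pt)} (h : PlaneM M) : FlipsToPlane M 0 :=
  ⟨0, fun _ => M, le_rfl, rfl, fun _ hi => absurd hi (Nat.not_lt_zero _), h⟩

lemma FlipsToPlane.mono {M : Set (Sym2 Pt)} {k l : ℕ} (h : FlipsToPlane M k) (hkl : k ≤ l) :
    FlipsToPlane M l :=
  let ⟨j, g, hj, hg⟩ := h; ⟨j, g, hj.trans hkl, hg⟩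

lemma FlipsToPlane.of_flip {M M' : Set (Sym2 Pt)} {k : ℕ} (hflip : Flip M M')
    (h : FlipsToPlane M' k) : FlipsToPlane M (k + 1) := by
  obtain ⟨j, g, hj, hg0, hg, hplane⟩ := h
  refine ⟨j + 1, fun | 0 => M | i + 1 => g i, by omega, rfl, ?_, hplane⟩
  rintro (_ | i) hi
  · show Flip M (g 0)
    rwa [hg0]
  · exact hg i (by omega)

namespace IsPM

variable {P Q : Finset Pt} {M N N' : Set (Sym2 Pt)}

lemma eq_of_mem (hM : IsPM P M) {e f : Sym2 Pt} {p : Pt} (he : e ∈ M) (hf : f ∈ M)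
    (hpe : p ∈ e) (hpf : p ∈ f) : e = f :=
  (hM.2.2 p (hM.2.1 e he p hpe)).unique ⟨he, hpe⟩ ⟨hf, hpf⟩

lemma finite (hM : IsPM P M) : M.Finite := by
  refine ((P ×ˢ P).finite_toSet.image (Function.uncurry Sym2.mk)).subset ?_
  intro e he
  induction e using Sym2.ind with
  | _ p q => exact ⟨(p, q), by simp [hM.2.1 _ he], rfl⟩

lemma card_le {F : Finset (Sym2 Pt)} (hF : IsPM P ↑F) : F.card ≤ P.card :=
  Finset.card_le_card_of_injOn (fun e => e.out.1)
    (fun e he => hF.2.1 e he _ (Sym2.out_fst_mem e))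
    (fun e he f hf h => hF.eq_of_mem he hf (Sym2.out_fst_mem e)
      (by rw [show e.out.1 = f.out.1 from h]; exact Sym2.out_fst_mem f))

lemma exists_ne_of_not_plane (hM : IsPM P M) (h : ¬ PlaneM M) : ∃ a ∈ P, ∃ b ∈ P, a ≠ b := by
  obtain ⟨_, he, _, _, a, b, _, _, rfl, _, hcross⟩ : ∃ e ∈ M, ∃ f ∈ M, EdgeCross e f := by
    simpa [PlaneM] using h
  exact ⟨a, hM.2.1 _ he a (by simp), b, hM.2.1 _ he b (by simp), hcross.1⟩

lemma mem_of_mem_of_subset (hM : IsPM P M) (hN : IsPM Q N) (hNM : N ⊆ M)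
    {e : Sym2 Pt} {p : Pt} (he : e ∈ M) (hpe : p ∈ e) (hpQ : p ∈ Q) : e ∈ N := by
  obtain ⟨f, ⟨hf, hpf⟩, -⟩ := hN.2.2 p hpQ
  rwa [hM.eq_of_mem he (hNM hf) hpe hpf]

lemma disjoint_sdiff (hM : IsPM P M) (hN : IsPM Q N) (hN' : IsPM Q N') (hNM : N ⊆ M) :
    Disjoint (M \ N) N' :=
  Set.disjoint_left.2 fun e ⟨heM, heN⟩ heN' => heN <| hM.mem_of_mem_of_subset hN hNM heM
    (Sym2.out_fst_mem e) (hN'.2.1 e heN' _ (Sym2.out_fst_mem e))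

lemma sdiff_union (hM : IsPM P M) (hN : IsPM Q N) (hN' : IsPM Q N') (hNM : N ⊆ M) :
    IsPM P (M \ N ∪ N') := by
  have hQP : ∀ p ∈ Q, p ∈ P := fun p hp =>
    let ⟨f, ⟨hf, hpf⟩, _⟩ := hN.2.2 p hp; hM.2.1 f (hNM hf) p hpf
  refine ⟨?_, ?_, fun p hp => ?_⟩
  · rintro e (⟨he, -⟩ | he)
    exacts [hM.1 e he, hN'.1 e he]
  · rintro e (⟨he, -⟩ | he) p hpe
    exacts [hM.2.1 e he p hpe, hQP p (hN'.2.1 e he p hpe)]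
  by_cases hpQ : p ∈ Q
  · obtain ⟨e, ⟨he, hpe⟩, huniq⟩ := hN'.2.2 p hpQ
    refine ⟨e, ⟨.inr he, hpe⟩, ?_⟩
    rintro f ⟨⟨hfM, hfN⟩ | hf, hpf⟩
    exacts [absurd (hM.mem_of_mem_of_subset hN hNM hfM hpf hpQ) hfN, huniq f ⟨hf, hpf⟩]
  · obtain ⟨e, ⟨he, hpe⟩, huniq⟩ := hM.2.2 p hp
    refine ⟨e, ⟨.inl ⟨he, fun heN => hpQ (hN.2.1 e heN p hpe)⟩, hpe⟩, ?_⟩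
    rintro f ⟨⟨hfM, -⟩ | hf, hpf⟩
    exacts [huniq f ⟨hfM, hpf⟩, absurd (hN'.2.1 f hf p hpf) hpQ]

open Classical in
lemma flip {F : Finset (Sym2 Pt)} (hF : IsPM P ↑F) {a b c d : Pt}
    (he : s(a, b) ∈ F) (hf : s(c, d) ∈ F) (hab : a ≠ b) (hac : a ≠ c) (had : a ≠ d)
    (hbc : b ≠ c) (hbd : b ≠ d) (hcd : c ≠ d) :
    IsPM P ↑(F \ {s(a, b), s(c, d)} ∪ {s(a, c), s(b, d)}) ∧
      ∑ e ∈ F \ {s(a, b), s(c, d)} ∪ {s(a, c), s(b, d)}, edgeLength e + dist a b + dist c d =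
        ∑ e ∈ F, edgeLength e + dist a c + dist b d := by
  have hN := isPM_pair hab hac had hbc hbd hcd
  have hN' : IsPM {a, b, c, d} {s(a, c), s(b, d)} := by
    simpa only [Finset.insert_comm c b] using isPM_pair hac hab had hbc.symm hcd hbd
  have hNF : ({s(a, b), s(c, d)} : Finset (Sym2 Pt)) ⊆ F := Finset.insert_subset he (by simpa)
  have hNF' : ({s(a, b), s(c, d)} : Set (Sym2 Pt)) ⊆ ↑F := by
    simpa [Set.insert_subset_iff] using ⟨he, hf⟩
  constructor
  · push_cast
    exact hF.sdiff_union hN hN' hNF'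
  · have hsumN : ∑ e ∈ {s(a, b), s(c, d)}, edgeLength e = dist a b + dist c d :=
      Finset.sum_pair (by simp [hac, had])
    have hsumN' : ∑ e ∈ {s(a, c), s(b, d)}, edgeLength e = dist a c + dist b d :=
      Finset.sum_pair (by simp [hab, had])
    rw [add_assoc, add_assoc, ← hsumN, ← hsumN']
    refine Finset.sum_sdiff_union_add hNF (Finset.disjoint_coe.1 ?_) _
    push_cast
    exact hF.disjoint_sdiff hN hN' hNF'

open Classical in
lemma exists_flip_sum_le {F : Finset (Sym2 Pt)} (hF : IsPM P ↑F) {δ : ℝ}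
    (hδ : ∀ p ∈ P, ∀ q ∈ P, p ≠ q → δ ≤ dist p q) (hnp : ¬ PlaneM ↑F) :
    ∃ F' : Finset (Sym2 Pt), Flip ↑F ↑F' ∧ IsPM P ↑F' ∧
      ∑ e ∈ F', edgeLength e + (2 - √2) * δ ≤ ∑ e ∈ F, edgeLength e := by
  obtain ⟨_, he, _, hf, a, b, c, d, rfl, rfl, hcross⟩ : ∃ e ∈ (F : Set (Sym2 Pt)),
      ∃ f ∈ (F : Set (Sym2 Pt)), EdgeCross e f := by
    simpa [PlaneM] using hnp
  obtain ⟨hab, hac, had, hbc, hbd, hcd, x, hxab, hxcd⟩ := hcross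
  have hP : ∀ p ∈ s(a, b), p ∈ P := hF.2.1 _ he
  have hP' : ∀ p ∈ s(c, d), p ∈ P := hF.2.1 _ hf
  simp only [Sym2.mem_iff, forall_eq_or_imp, forall_eq] at hP hP'
  rcases exists_dist_add_dist_add_le_of_mem_openSegment hxab hxcd
    (hδ a hP.1 b hP.2 hab) (hδ a hP.1 c hP'.1 hac) (hδ a hP.1 d hP'.2 had)
    (hδ b hP.2 c hP'.1 hbc) (hδ b hP.2 d hP'.2 hbd) (hδ c hP'.1 d hP'.2 hcd) with hgain | hgain
  · obtain ⟨hF', hsum⟩ := hF.flip he hf hab hac had hbc hbd hcd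
    exact ⟨_, ⟨a, b, c, d, he, hf, ⟨hab, hac, had, hbc, hbd, hcd, x, hxab, hxcd⟩,
      .inl (by push_cast; rfl)⟩, hF', by linarith⟩
  · have hf' : s(d, c) ∈ F := Sym2.eq_swap ▸ hf
    obtain ⟨hF', hsum⟩ := hF.flip he hf' hab had hac hbd hbc hcd.symm
    rw [Sym2.eq_swap (a := d)] at hsum hF'
    rw [dist_comm d c] at hsum
    exact ⟨_, ⟨a, b, c, d, he, hf, ⟨hab, hac, had, hbc, hbd, hcd, x, hxab, hxcd⟩,
      .inr (by push_cast; rfl)⟩, hF', by linarith⟩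

lemma flipsToPlane_of_sum_lt {δ : ℝ} (hδ : ∀ p ∈ P, ∀ q ∈ P, p ≠ q → δ ≤ dist p q) (k : ℕ)
    {F : Finset (Sym2 Pt)} (hF : IsPM P ↑F)
    (hsum : ∑ e ∈ F, edgeLength e < (2 - √2) * δ * (k + 1)) : FlipsToPlane ↑F k := by
  induction k generalizing F with
  | zero =>
    refine .of_plane (not_not.1 fun hnp => ?_)
    obtain ⟨F', -, -, hsum'⟩ := hF.exists_flip_sum_le hδ hnp
    have := Finset.sum_nonneg fun e (_ : e ∈ F') => edgeLength_nonneg e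
    rw [Nat.cast_zero, zero_add, mul_one] at hsum
    linarith
  | succ k ih =>
    by_cases hplane : PlaneM ↑F
    · exact (FlipsToPlane.of_plane hplane).mono (Nat.zero_le _)
    obtain ⟨F', hflip, hF', hsum'⟩ := hF.exists_flip_sum_le hδ hplane
    exact (ih hF' (by push_cast at hsum; linarith)).of_flip hflip

lemma flipsToPlane_floor (hM : IsPM P M) {δ D : ℝ} (hδ : 0 < δ) (hD : 0 ≤ D)
    (hδP : ∀ p ∈ P, ∀ q ∈ P, p ≠ q → δ ≤ dist p q)
    (hDP : ∀ p ∈ P, ∀ q ∈ P, p ≠ q → dist p q ≤ D) :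
    FlipsToPlane M ⌊P.card * D / ((2 - √2) * δ)⌋₊ := by
  have hc : 0 < (2 - √2) * δ := mul_pos sub_sqrt_two_pos hδ
  set F := hM.finite.toFinset
  have hF : IsPM P ↑F := by rwa [Set.Finite.coe_toFinset]
  have hlen : ∀ e ∈ F, edgeLength e ≤ D := by
    intro e he
    rw [Set.Finite.mem_toFinset] at he
    induction e using Sym2.ind with
    | _ p q =>
      exact hDP p (hM.2.1 _ he p (by simp)) q (hM.2.1 _ he q (by simp))
        (fun hpq => hM.1 _ he (by simp [hpq]))
  rw [← hM.finite.coe_toFinset]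
  refine flipsToPlane_of_sum_lt hδP _ hF ?_
  calc ∑ e ∈ F, edgeLength e ≤ F.card * D := by simpa using Finset.sum_le_card_nsmul _ _ _ hlen
    _ ≤ P.card * D := by gcongr; exact hF.card_le
    _ < (2 - √2) * δ * (⌊P.card * D / ((2 - √2) * δ)⌋₊ + 1) := by
        rw [mul_comm ((2 - √2) * δ), ← div_lt_iff₀ hc]
        exact Nat.lt_floor_add_one _

end IsPM

theorem stmt0_general (n : ℕ) (P : Finset Pt) (hcard : P.card = n)
    (Δ : ℝ)
    (hΔ : Δ = sSup {d : ℝ | ∃ p ∈ P, ∃ q ∈ P, p ≠ q ∧ d = dist p q} /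
              sInf {d : ℝ | ∃ p ∈ P, ∃ q ∈ P, p ≠ q ∧ d = dist p q})
    (M : Set (Sym2 Pt)) (hM : IsPM P M) :
    ∃ k : ℕ, (k : ℝ) ≤ 2 / (2 - Real.sqrt 2) * n * Δ ∧ FlipsToPlane M k := by
  set S := {d : ℝ | ∃ p ∈ P, ∃ q ∈ P, p ≠ q ∧ d = dist p q}
  have hS : ∀ d ∈ S, 0 ≤ d := by rintro _ ⟨p, -, q, -, -, rfl⟩; exact dist_nonneg
  have hΔ_nonneg : 0 ≤ Δ := hΔ ▸ div_nonneg (Real.sSup_nonneg hS) (Real.sInf_nonneg hS)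
  have hc := sub_sqrt_two_pos.le
  by_cases hplane : PlaneM M
  · exact ⟨0, by rw [Nat.cast_zero]; positivity, .of_plane hplane⟩
  obtain ⟨a, ha, b, hb, hab⟩ := hM.exists_ne_of_not_plane hplane
  have hδ : 0 < sInf S := by
    obtain ⟨p, -, q, -, hpq, h⟩ :=
      (show S.Nonempty from ⟨_, a, ha, b, hb, hab, rfl⟩).csInf_mem (distances_finite P)
    exact h ▸ dist_pos.2 hpq
  refine ⟨_, ?_, hM.flipsToPlane_floor hδ (Real.sSup_nonneg hS)
    (fun p hp q hq hpq => csInf_le (distances_finite P).bddBelow ⟨p, hp, q, hq, hpq, rfl⟩)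
    (fun p hp q hq hpq => le_csSup (distances_finite P).bddAbove ⟨p, hp, q, hq, hpq, rfl⟩)⟩
  calc (⌊P.card * sSup S / ((2 - √2) * sInf S)⌋₊ : ℝ)
      ≤ P.card * sSup S / ((2 - √2) * sInf S) := Nat.floor_le <| div_nonneg
        (mul_nonneg P.card.cast_nonneg (Real.sSup_nonneg hS)) (mul_pos sub_sqrt_two_pos hδ).le
    _ = 1 / (2 - √2) * n * Δ := by rw [hΔ, hcard]; field_simp
    _ ≤ 2 / (2 - √2) * n * Δ := by gcongr; norm_num

/-- For every perfect matching `M` on a set `P` of `n` points in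
general position with spread `Δ` (the ratio of the maximum to the minimum pairwise
distance in `P`), there is a sequence of at most `(2/(2-√2))·n·Δ` flips transforming
`M` into a plane perfect matching. -/
theorem stmt0 (n : ℕ) (hn : Even n) (P : Finset Pt) (hcard : P.card = n)
    (hgp : GenPos ↑P) (Δ : ℝ)
    (hΔ : Δ = sSup {d : ℝ | ∃ p ∈ P, ∃ q ∈ P, p ≠ q ∧ d = dist p q} /
              sInf {d : ℝ | ∃ p ∈ P, ∃ q ∈ P, p ≠ q ∧ d = dist p q})
    (M : Set (Sym2 Pt)) (hM : IsPM P M) :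
    ∃ k : ℕ, (k : ℝ) ≤ 2 / (2 - Real.sqrt 2) * n * Δ ∧ FlipsToPlane M k :=
  stmt0_general n P hcard Δ hΔ M hM
end
end

section
/- Let p, q, r, s be four distinct points in ℝ² such that the open segments pq and rs cross at a point o, and let μ' be the minimum distance between any pair of points in {p, q, r, s}. If the angle ∠roq is at most π/2, then (|pq| + |rs|) − (|ps| + |rq|) ≥ ((2−√2)/4)·μ'. -/
open EuclideanGeometry Real

noncomputable section

/-! Let the crossing point `o` split the segments into `a = |po|`, `b = |oq|`, `c = |ro|`,
`d = |os|`. The angles `∠roq` and `∠pos` are vertical, so both are at most `π/2` and the law of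
cosines gives `|ps| ≤ √(a² + d²)` and `|rq| ≤ √(c² + b²)`. Elementarily
`√(a² + d²) ≤ a + d - (2 - √2) min(a, d)`, so the gain is at least
`(2 - √2)(min(a, d) + min(c, b))`, and `min(a, d) + min(c, b)` is the minimum of `a + c ≥ |pr|`,
`a + b = |pq|`, `d + c = |rs|` and `d + b ≥ |qs|`, hence at least `μ'`. -/

theorem sbtw_of_mem_openSegment {𝕜 E : Type*} [Field 𝕜] [LinearOrder 𝕜] [IsStrictOrderedRing 𝕜]
    [AddCommGroup E] [Module 𝕜 E] {p q o : E} (hpq : p ≠ q) (ho : o ∈ openSegment 𝕜 p q) :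
    Sbtw 𝕜 p o q :=
  sbtw_iff_mem_image_Ioo_and_ne.2 ⟨openSegment_eq_image_lineMap 𝕜 p q ▸ ho, hpq⟩

-- Equality holds at `a = d`: the isosceles right triangle is the extremal case.
theorem sqrt_sq_add_sq_le_add_sub_mul_min {a d : ℝ} (ha : 0 ≤ a) (hd : 0 ≤ d) :
    √(a ^ 2 + d ^ 2) ≤ a + d - (2 - √2) * min a d := by
  wlog had : a ≤ d generalizing a d
  · simpa only [add_comm d, add_comm (d ^ 2), min_comm d] using this hd ha (le_of_not_ge had)
  have h2 : √2 ^ 2 = 2 := sq_sqrt zero_le_two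
  have h1 : 1 ≤ √2 := one_le_sqrt.2 one_le_two
  rw [min_eq_left had, sqrt_le_left (by nlinarith)]
  nlinarith [mul_nonneg (mul_nonneg (sub_nonneg.2 h1) ha) (sub_nonneg.2 had)]

section Geometry

variable {V P : Type*} [NormedAddCommGroup V] [InnerProductSpace ℝ V] [MetricSpace P]
  [NormedAddTorsor V P]

theorem dist_sq_le_dist_sq_add_dist_sq_of_angle_le_pi_div_two {p₁ p₂ p₃ : P}
    (h : ∠ p₁ p₂ p₃ ≤ π / 2) : dist p₁ p₃ ^ 2 ≤ dist p₁ p₂ ^ 2 + dist p₃ p₂ ^ 2 := by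
  have hcos : 0 ≤ cos (∠ p₁ p₂ p₃) :=
    cos_nonneg_of_mem_Icc ⟨by linarith [angle_nonneg p₁ p₂ p₃, pi_pos], h⟩
  nlinarith [law_cos p₁ p₂ p₃, mul_nonneg (mul_nonneg (dist_nonneg (x := p₁) (y := p₂))
    (dist_nonneg (x := p₃) (y := p₂))) hcos]

theorem dist_add_dist_add_mul_le_of_sbtw_of_angle_le_pi_div_two {p q r s o : P}
    (h₁ : Sbtw ℝ p o q) (h₂ : Sbtw ℝ r o s) (h : ∠ r o q ≤ π / 2) :
    dist p s + dist r q + (2 - √2) * (min (dist p o) (dist o s) + min (dist r o) (dist o q)) ≤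
      dist p q + dist r s := by
  have hvert : ∠ p o s = ∠ r o q := by
    rw [angle_eq_angle_of_angle_eq_pi_of_angle_eq_pi h₁.angle₁₂₃_eq_pi
      (by rw [angle_comm]; exact h₂.angle₁₂₃_eq_pi), angle_comm]
  have hps : dist p s ≤ √(dist p o ^ 2 + dist o s ^ 2) := by
    rw [dist_comm o s]
    exact le_sqrt_of_sq_le (dist_sq_le_dist_sq_add_dist_sq_of_angle_le_pi_div_two (hvert ▸ h))
  have hrq : dist r q ≤ √(dist r o ^ 2 + dist o q ^ 2) := by
    rw [dist_comm o q]
    exact le_sqrt_of_sq_le (dist_sq_le_dist_sq_add_dist_sq_of_angle_le_pi_div_two h)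
  have k₁ := sqrt_sq_add_sq_le_add_sub_mul_min (dist_nonneg (x := p) (y := o))
    (dist_nonneg (x := o) (y := s))
  have k₂ := sqrt_sq_add_sq_le_add_sub_mul_min (dist_nonneg (x := r) (y := o))
    (dist_nonneg (x := o) (y := q))
  rw [← dist_add_dist_eq_iff.2 h₁.wbtw, ← dist_add_dist_eq_iff.2 h₂.wbtw]
  linarith

theorem min_dist_le_min_add_min_of_wbtw {p q r s o : P} (h₁ : Wbtw ℝ p o q)
    (h₂ : Wbtw ℝ r o s) :
    min (min (dist p q) (dist r s)) (min (dist p r) (dist q s)) ≤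
      min (dist p o) (dist o s) + min (dist r o) (dist o q) := by
  have hpq := dist_add_dist_eq_iff.2 h₁
  have hrs := dist_add_dist_eq_iff.2 h₂
  have hpr := dist_triangle p o r
  have hqs := dist_triangle q o s
  rw [dist_comm o r] at hpr
  rw [dist_comm q o] at hqs
  simp only [min_def]
  split_ifs <;> linarith

end Geometry

theorem stmt1_general (p q r s o : Pt)
    (hpq : p ≠ q) (hrs : r ≠ s)
    (ho₁ : o ∈ openSegment ℝ p q) (ho₂ : o ∈ openSegment ℝ r s)
    (μ' : ℝ)
    (hμ : μ' = min (dist p q) (min (dist p r) (min (dist p s)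
            (min (dist q r) (min (dist q s) (dist r s))))))
    (hangle : ∠ r o q ≤ π / 2) :
    (dist p q + dist r s) - (dist p s + dist r q) ≥ (2 - Real.sqrt 2) / 4 * μ' := by
  have h₁ := sbtw_of_mem_openSegment hpq ho₁
  have h₂ := sbtw_of_mem_openSegment hrs ho₂
  have hgain := dist_add_dist_add_mul_le_of_sbtw_of_angle_le_pi_div_two h₁ h₂ hangle
  have hmin := min_dist_le_min_add_min_of_wbtw h₁.wbtw h₂.wbtw
  have hμ_le : μ' ≤ min (min (dist p q) (dist r s)) (min (dist p r) (dist q s)) := by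
    rw [hμ]
    simp only [le_min_iff, min_le_iff, le_refl, true_or, or_true, and_self]
  have hμ_nonneg : 0 ≤ μ' := by rw [hμ]; positivity
  have hsqrt : √2 ≤ 2 := by rw [sqrt_le_left zero_le_two]; norm_num
  calc (2 - √2) / 4 * μ' ≤ (2 - √2) * μ' := by nlinarith
    _ ≤ (2 - √2) * (min (dist p o) (dist o s) + min (dist r o) (dist o q)) := by gcongr; linarith
    _ ≤ (dist p q + dist r s) - (dist p s + dist r q) := by linarith

/-- If the open segments `pq` and `rs` (on four distinct points) cross
at `o`, `μ'` is the minimum pairwise distance among `{p, q, r, s}`, and `∠roq ≤ π/2`,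
then `(|pq| + |rs|) - (|ps| + |rq|) ≥ ((2 - √2)/4)·μ'`. -/
theorem stmt1 (p q r s o : Pt)
    (hpq : p ≠ q) (hpr : p ≠ r) (hps : p ≠ s) (hqr : q ≠ r) (hqs : q ≠ s) (hrs : r ≠ s)
    (ho₁ : o ∈ openSegment ℝ p q) (ho₂ : o ∈ openSegment ℝ r s)
    (μ' : ℝ)
    (hμ : μ' = min (dist p q) (min (dist p r) (min (dist p s)
            (min (dist q r) (min (dist q s) (dist r s))))))
    (hangle : ∠ r o q ≤ π / 2) :
    (dist p q + dist r s) - (dist p s + dist r q) ≥ (2 - Real.sqrt 2) / 4 * μ' :=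
  stmt1_general p q r s o hpq hrs ho₁ ho₂ μ' hμ hangle
end
end

section
/- Let a, b, c, d be four distinct points in ℝ² such that the open segments ab and cd cross at a point o, and let μ'' be the minimum distance between any pair of points in {a, b, c, d}. If the angle ∠cob is at most π/3, then (|ab| + |cd|) − (|ad| + |cb|) ≥ μ''. -/
open EuclideanGeometry Real

noncomputable section

/-!
The crossing point `o` splits the diagonals, so `|ab| + |cd| = |oa| + |ob| + |oc| + |od|`.
The angle `∠cob` and its vertical angle `∠aod` are at most `π/3`, and in a triangle the side
opposite such an angle is at most the longer adjacent side; hence `|ad| + |cb|` is at most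
`max(|oa|, |od|) + max(|ob|, |oc|)`. The difference is therefore at least
`min(|oa|, |od|) + min(|ob|, |oc|)`, which by the triangle inequality bounds one of
`|ab|, |ac|, |db|, |dc|`, all at least `μ''`.
-/

theorem sbtw_of_mem_openSegment_s2 {E : Type*} [AddCommGroup E] [Module ℝ E] {a b o : E}
    (h : o ∈ openSegment ℝ a b) (hab : a ≠ b) : Sbtw ℝ a o b := by
  refine ⟨mem_segment_iff_wbtw.1 (openSegment_subset_segment ℝ a b h), ?_, ?_⟩
  · rintro rfl; exact hab (left_mem_openSegment_iff.1 h)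
  · rintro rfl; exact hab (right_mem_openSegment_iff.1 h)

section Angle

variable {V P : Type*} [NormedAddCommGroup V] [InnerProductSpace ℝ V] [MetricSpace P]
  [NormedAddTorsor V P]

theorem dist_le_max_of_angle_le_pi_div_three {x o y : P} (h : ∠ x o y ≤ π / 3) :
    dist x y ≤ max (dist x o) (dist y o) := by
  have hcos : 1 / 2 ≤ cos (∠ x o y) := by
    rw [← cos_pi_div_three]
    exact cos_le_cos_of_nonneg_of_le_pi (angle_nonneg x o y) (by linarith [pi_pos]) h
  have hsq : dist x y * dist x y ≤ max (dist x o) (dist y o) * max (dist x o) (dist y o) := by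
    have hx := dist_nonneg (x := x) (y := o)
    have hy := dist_nonneg (x := y) (y := o)
    rw [law_cos x o y]
    rcases le_total (dist x o) (dist y o) with hle | hle
    · rw [max_eq_right hle]; nlinarith [mul_nonneg hx hy, mul_nonneg hx (sub_nonneg.2 hle)]
    · rw [max_eq_left hle]; nlinarith [mul_nonneg hx hy, mul_nonneg hy (sub_nonneg.2 hle)]
  exact (mul_self_le_mul_self_iff dist_nonneg (le_max_of_le_left dist_nonneg)).2 hsq

theorem min_add_min_le_of_sbtw_of_sbtw {a b c d o : P} (h₁ : Sbtw ℝ a o b) (h₂ : Sbtw ℝ c o d)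
    (hangle : ∠ c o b ≤ π / 3) :
    min (dist a o) (dist d o) + min (dist b o) (dist c o) ≤
      (dist a b + dist c d) - (dist a d + dist c b) := by
  have hvert : ∠ a o d = ∠ b o c :=
    angle_eq_angle_of_angle_eq_pi_of_angle_eq_pi h₁.angle₁₂₃_eq_pi h₂.angle₃₂₁_eq_pi
  have had : dist a d ≤ max (dist a o) (dist d o) :=
    dist_le_max_of_angle_le_pi_div_three (by rwa [hvert, angle_comm])
  have hcb : dist c b ≤ max (dist c o) (dist b o) := dist_le_max_of_angle_le_pi_div_three hangle
  have hab := h₁.wbtw.dist_add_dist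
  have hcd := h₂.wbtw.dist_add_dist
  rw [max_comm] at hcb
  linarith [min_add_max (dist a o) (dist d o), min_add_max (dist b o) (dist c o),
    dist_comm o b, dist_comm o d]

end Angle

theorem min_dist_le_min_add_min {α : Type*} [PseudoMetricSpace α] (a b c d o : α) :
    min (min (dist a b) (dist a c)) (min (dist d b) (dist d c)) ≤
      min (dist a o) (dist d o) + min (dist b o) (dist c o) := by
  have hab := dist_triangle_right a b o
  have hac := dist_triangle_right a c o
  have hdb := dist_triangle_right d b o
  have hdc := dist_triangle_right d c o
  rcases min_cases (dist a o) (dist d o) with ⟨h₁, -⟩ | ⟨h₁, -⟩ <;>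
    rcases min_cases (dist b o) (dist c o) with ⟨h₂, -⟩ | ⟨h₂, -⟩ <;>
    rw [h₁, h₂] <;> simp only [min_le_iff] <;> tauto

theorem stmt2_general (a b c d o : Pt)
    (hab : a ≠ b) (hcd : c ≠ d)
    (ho₁ : o ∈ openSegment ℝ a b) (ho₂ : o ∈ openSegment ℝ c d)
    (μ'' : ℝ)
    (hμ : μ'' = min (dist a b) (min (dist a c) (min (dist a d)
            (min (dist b c) (min (dist b d) (dist c d))))))
    (hangle : ∠ c o b ≤ π / 3) :
    (dist a b + dist c d) - (dist a d + dist c b) ≥ μ'' := by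
  have h₁ : Sbtw ℝ a o b := sbtw_of_mem_openSegment_s2 ho₁ hab
  have h₂ : Sbtw ℝ c o d := sbtw_of_mem_openSegment_s2 ho₂ hcd
  have hcross := min_add_min_le_of_sbtw_of_sbtw h₁ h₂ hangle
  have hμ_le : μ'' ≤ min (min (dist a b) (dist a c)) (min (dist d b) (dist d c)) := by
    rw [hμ, dist_comm d b, dist_comm d c]
    refine le_min (le_min (min_le_left _ _) ?_) (le_min ?_ ?_)
    · exact (min_le_right _ _).trans (min_le_left _ _)
    · exact (min_le_right _ _).trans <| (min_le_right _ _).trans <| (min_le_right _ _).trans <|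
        (min_le_right _ _).trans (min_le_left _ _)
    · exact (min_le_right _ _).trans <| (min_le_right _ _).trans <| (min_le_right _ _).trans <|
        (min_le_right _ _).trans (min_le_right _ _)
  linarith [min_dist_le_min_add_min a b c d o]

/-- If the open segments `ab` and `cd` (on four distinct points) cross
at `o`, `μ''` is the minimum pairwise distance among `{a, b, c, d}`, and `∠cob ≤ π/3`,
then `(|ab| + |cd|) - (|ad| + |cb|) ≥ μ''`. -/
theorem stmt2 (a b c d o : Pt)
    (hab : a ≠ b) (hac : a ≠ c) (had : a ≠ d) (hbc : b ≠ c) (hbd : b ≠ d) (hcd : c ≠ d)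
    (ho₁ : o ∈ openSegment ℝ a b) (ho₂ : o ∈ openSegment ℝ c d)
    (μ'' : ℝ)
    (hμ : μ'' = min (dist a b) (min (dist a c) (min (dist a d)
            (min (dist b c) (min (dist b d) (dist c d))))))
    (hangle : ∠ c o b ≤ π / 3) :
    (dist a b + dist c d) - (dist a d + dist c b) ≥ μ'' :=
  stmt2_general a b c d o hab hcd ho₁ ho₂ μ'' hμ hangle
end
end

section
/- Let a, b, c, d be four distinct points in ℝ² such that the open segments ab and cd cross and the segment ab is perpendicular to the segment cd. Let μ'' be the minimum distance between any pair of points in {a, b, c, d}. Then (|ab| + |cd|) − (|ad| + |cb|) ≥ ((2−√2)/2)·μ''. -/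
/-! Let `p` be the crossing point. The triangles `apd` and `cpb` have a right angle at `p`,
and in a right triangle with legs `x, y` the excess `x + y - √(x² + y²)` is at least
`(2 - √2) · min x y`. Hence the left-hand side is at least
`(2 - √2) · (min |ap| |pd| + min |cp| |pb|)`, and whichever legs realise the two minima, their
sum bounds one of `|ab|, |ac|, |bd|, |cd|` by the triangle inequality through `p`, so it is at
least `μ''`. -/

open EuclideanGeometry Real

noncomputable section

theorem sqrt_sq_add_sq_le_of_le {x y : ℝ} (hx : 0 ≤ x) (hxy : x ≤ y) :
    √(x ^ 2 + y ^ 2) ≤ y + (√2 - 1) * x := by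
  have h2 : √2 ^ 2 = 2 := sq_sqrt (by norm_num)
  have h1 : 1 ≤ √2 := by nlinarith [sqrt_nonneg 2]
  refine sqrt_le_iff.mpr ⟨by nlinarith, ?_⟩
  -- the square of the right-hand side exceeds `x² + y²` by `2 (√2 - 1) x (y - x)`
  nlinarith [mul_nonneg (mul_nonneg (sub_nonneg.mpr h1) hx) (sub_nonneg.mpr hxy)]

theorem sqrt_sq_add_sq_le_add_sub_min {x y : ℝ} (hx : 0 ≤ x) (hy : 0 ≤ y) :
    √(x ^ 2 + y ^ 2) ≤ x + y - (2 - √2) * min x y := by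
  rcases le_total x y with hxy | hyx
  · rw [min_eq_left hxy]
    linarith [sqrt_sq_add_sq_le_of_le hx hxy]
  · rw [min_eq_right hyx, add_comm (x ^ 2)]
    linarith [sqrt_sq_add_sq_le_of_le hy hyx]

theorem le_min_add_min_of_le_add {μ s t u v : ℝ} (hst : μ ≤ s + t) (hsu : μ ≤ s + u)
    (htv : μ ≤ t + v) (huv : μ ≤ u + v) : μ ≤ min s v + min u t := by
  rcases le_total s v with h | h <;> rcases le_total u t with h' | h' <;>
    simp only [min_eq_left, min_eq_right, h, h'] <;> linarith

section InnerProductSpace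

open scoped InnerProductSpace

variable {E : Type*} [NormedAddCommGroup E] [InnerProductSpace ℝ E]

theorem norm_sub_le_of_inner_eq_zero {x y : E} (h : ⟪x, y⟫_ℝ = 0) :
    ‖x - y‖ ≤ ‖x‖ + ‖y‖ - (2 - √2) * min ‖x‖ ‖y‖ := by
  rw [norm_sub_eq_sqrt_iff_real_inner_eq_zero.mpr h, ← sq, ← sq]
  exact sqrt_sq_add_sq_le_add_sub_min (norm_nonneg x) (norm_nonneg y)

theorem dist_le_of_inner_sub_eq_zero {x y p : E} (h : ⟪x - p, y - p⟫_ℝ = 0) :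
    dist x y ≤ dist x p + dist y p - (2 - √2) * min (dist x p) (dist y p) := by
  simpa only [dist_eq_norm, sub_sub_sub_cancel_right] using norm_sub_le_of_inner_eq_zero h

theorem sub_mem_span_singleton_of_mem_segment {a b p : E} (hp : p ∈ segment ℝ a b) :
    a - p ∈ ℝ ∙ (b - a) ∧ b - p ∈ ℝ ∙ (b - a) := by
  rw [segment_eq_image'] at hp
  obtain ⟨θ, -, rfl⟩ := hp
  simp only [Submodule.mem_span_singleton]
  exact ⟨⟨-θ, by module⟩, ⟨1 - θ, by module⟩⟩

end InnerProductSpace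

theorem stmt3_general (a b c d : Pt)
    (hcross : (openSegment ℝ a b ∩ openSegment ℝ c d).Nonempty)
    (hperp : inner (𝕜 := ℝ) (b - a) (d - c) = 0)
    (μ'' : ℝ)
    (hμ : μ'' = min (dist a b) (min (dist a c) (min (dist a d)
            (min (dist b c) (min (dist b d) (dist c d)))))) :
    (dist a b + dist c d) - (dist a d + dist c b) ≥ (2 - Real.sqrt 2) / 2 * μ'' := by
  obtain ⟨p, hpab, hpcd⟩ := hcross
  replace hpab := openSegment_subset_segment ℝ a b hpab
  replace hpcd := openSegment_subset_segment ℝ c d hpcd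
  have hortho : (ℝ ∙ (b - a)) ⟂ (ℝ ∙ (d - c)) := by simpa [Submodule.isOrtho_span] using hperp
  obtain ⟨hap, hbp⟩ := sub_mem_span_singleton_of_mem_segment hpab
  obtain ⟨hcp, hdp⟩ := sub_mem_span_singleton_of_mem_segment hpcd
  have had := dist_le_of_inner_sub_eq_zero (hortho.inner_eq hap hdp)
  have hcb := dist_le_of_inner_sub_eq_zero (hortho.symm.inner_eq hcp hbp)
  have hab : dist a p + dist b p = dist a b := by
    rw [dist_comm b]; exact dist_add_dist_of_mem_segment hpab
  have hcd : dist c p + dist d p = dist c d := by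
    rw [dist_comm d]; exact dist_add_dist_of_mem_segment hpcd
  have hμ_le : μ'' ≤ min (dist a p) (dist d p) + min (dist c p) (dist b p) := by
    rw [hμ]
    exact le_min_add_min_of_le_add (min_le_of_left_le hab.ge)
      (min_le_of_right_le (min_le_of_left_le (dist_triangle_right a c p)))
      (min_le_of_right_le <| min_le_of_right_le <| min_le_of_right_le <| min_le_of_right_le <|
        min_le_of_left_le (dist_triangle_right b d p))
      (min_le_of_right_le <| min_le_of_right_le <| min_le_of_right_le <| min_le_of_right_le <|
        min_le_of_right_le hcd.ge)
  have hμ_nonneg : 0 ≤ μ'' := by rw [hμ]; positivity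
  have hk : 0 ≤ 2 - √2 := sub_nonneg.mpr (sqrt_le_iff.mpr ⟨by norm_num, by norm_num⟩)
  linarith [mul_le_mul_of_nonneg_left hμ_le hk, mul_nonneg hk hμ_nonneg]

/-- If the open segments `ab` and `cd` (on four distinct points) cross
and are perpendicular, and `μ''` is the minimum pairwise distance among `{a, b, c, d}`,
then `(|ab| + |cd|) - (|ad| + |cb|) ≥ ((2 - √2)/2)·μ''`. -/
theorem stmt3 (a b c d : Pt)
    (hab : a ≠ b) (hac : a ≠ c) (had : a ≠ d) (hbc : b ≠ c) (hbd : b ≠ d) (hcd : c ≠ d)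
    (hcross : (openSegment ℝ a b ∩ openSegment ℝ c d).Nonempty)
    (hperp : inner (𝕜 := ℝ) (b - a) (d - c) = 0)
    (μ'' : ℝ)
    (hμ : μ'' = min (dist a b) (min (dist a c) (min (dist a d)
            (min (dist b c) (min (dist b d) (dist c d)))))) :
    (dist a b + dist c d) - (dist a d + dist c b) ≥ (2 - Real.sqrt 2) / 2 * μ'' :=
  stmt3_general a b c d hcross hperp μ'' hμ
end
end

section
/- Let p, q, r, s be four distinct points in ℝ² such that the open segments pq and rs cross, and let μ' be the minimum distance between any pair of points in {p, q, r, s}. Then at least one of the following holds: (|pq| + |rs|) − (|ps| + |rq|) ≥ ((2−√2)/4)·μ', or (|pq| + |rs|) − (|pr| + |qs|) ≥ ((2−√2)/4)·μ'. In particular, one of the two possible flips of the crossing pair pq, rs decreases the total length by at least ((2−√2)/4)·μ'. -/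
open EuclideanGeometry Real

noncomputable section

private lemma stmt4.sqrtlem (a d : ℝ) (ha : 0 ≤ a) (had : a ≤ d) :
    Real.sqrt (a^2 + d^2) ≤ a + d - (2 - Real.sqrt 2) * a := by
  have hs : Real.sqrt 2 ^ 2 = 2 := Real.sq_sqrt (by norm_num)
  have h1 : 1 ≤ Real.sqrt 2 := by nlinarith [Real.sqrt_nonneg 2]
  have hr : a + d - (2 - Real.sqrt 2) * a
      = Real.sqrt ((a + d - (2 - Real.sqrt 2) * a)^2) :=
    (Real.sqrt_sq (by nlinarith)).symm
  rw [hr]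
  apply Real.sqrt_le_sqrt
  nlinarith [mul_nonneg (mul_nonneg (sub_nonneg.2 h1) ha) (sub_nonneg.2 had)]

private lemma stmt4.L1 (a d : ℝ) (ha : 0 ≤ a) (hd : 0 ≤ d) :
    (2 - Real.sqrt 2) * min a d ≤ a + d - Real.sqrt (a^2 + d^2) := by
  rcases le_total a d with h | h
  · rw [min_eq_left h]; have := stmt4.sqrtlem a d ha h; linarith
  · rw [min_eq_right h, add_comm (a^2)]
    have := stmt4.sqrtlem d a hd h; linarith

private lemma stmt4.nsq (w z : Pt) (α β : ℝ) :
    ‖α • w + β • z‖^2 = α^2*‖w‖^2 + 2*(α*β)*(inner ℝ w z : ℝ) + β^2*‖z‖^2 := by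
  rw [norm_add_sq_real, real_inner_smul_left, real_inner_smul_right,
    norm_smul, norm_smul]
  simp [mul_pow, sq_abs]; ring

private lemma stmt4.key (A B C D m ps rq : ℝ)
    (hA : 0 ≤ A) (hB : 0 ≤ B) (hC : 0 ≤ C) (hD : 0 ≤ D) (hm : 0 ≤ m)
    (h1 : m ≤ A + B) (h2 : m ≤ A + C) (h3 : m ≤ D + B) (h4 : m ≤ D + C)
    (hps : ps ≤ Real.sqrt (A^2 + D^2)) (hrq : rq ≤ Real.sqrt (B^2 + C^2)) :
    (A + B + (C + D)) - (ps + rq) ≥ (2 - Real.sqrt 2) / 4 * m := by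
  have hs : Real.sqrt 2 ^ 2 = 2 := Real.sq_sqrt (by norm_num)
  have hsn : Real.sqrt 2 ≤ 3/2 := by nlinarith [Real.sqrt_nonneg 2]
  have l1 := stmt4.L1 A D hA hD
  have l2 := stmt4.L1 B C hB hC
  have hmin : m ≤ min A D + min B C := by
    rcases le_total A D with h | h <;> rcases le_total B C with h' | h' <;>
      simp_all [min_eq_left, min_eq_right]
  nlinarith [mul_nonneg (by linarith : (0:ℝ) ≤ 2 - Real.sqrt 2) (sub_nonneg.2 hmin)]

set_option maxHeartbeats 1600000 in
/-- If the open segments `pq` and `rs` (on four distinct points) cross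
and `μ'` is the minimum pairwise distance among `{p, q, r, s}`, then one of the two
possible flips of the crossing pair decreases the total length by at least
`((2 - √2)/4)·μ'`. -/
theorem stmt4 (p q r s : Pt)
    (hpq : p ≠ q) (hpr : p ≠ r) (hps : p ≠ s) (hqr : q ≠ r) (hqs : q ≠ s) (hrs : r ≠ s)
    (hcross : (openSegment ℝ p q ∩ openSegment ℝ r s).Nonempty)
    (μ' : ℝ)
    (hμ : μ' = min (dist p q) (min (dist p r) (min (dist p s)
            (min (dist q r) (min (dist q s) (dist r s)))))) :
    (dist p q + dist r s) - (dist p s + dist r q) ≥ (2 - Real.sqrt 2) / 4 * μ' ∨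
    (dist p q + dist r s) - (dist p r + dist q s) ≥ (2 - Real.sqrt 2) / 4 * μ' := by
  obtain ⟨x, hx1, hx2⟩ := hcross
  obtain ⟨a, b, ha, hb, hab, hx⟩ := hx1
  obtain ⟨c, d, hc, hd, hcd, hy⟩ := hx2
  obtain rfl : a = 1 - b := by linarith
  obtain rfl : d = 1 - c := by linarith
  -- vector identities
  have hvps : p - s = b • (p - q) + c • (r - s) := by
    have h := hx.trans hy.symm
    linear_combination (norm := module) h
  have hvrq : r - q = (1-b) • (p - q) + (1-c) • (r - s) := by
    have h := hx.trans hy.symm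
    linear_combination (norm := module) -h
  have hvpr : p - r = b • (p - q) + (-(1-c)) • (r - s) := by
    have h := hx.trans hy.symm
    linear_combination (norm := module) h
  have hvqs : q - s = (-(1-b)) • (p - q) + c • (r - s) := by
    have h := hx.trans hy.symm
    linear_combination (norm := module) h
  have hpx : p - x = b • (p - q) := by linear_combination (norm := module) hx
  have hqx : q - x = (-(1-b)) • (p - q) := by linear_combination (norm := module) hx
  have hrx : r - x = (1-c) • (r - s) := by linear_combination (norm := module) hy
  have hsx : s - x = (-c) • (r - s) := by linear_combination (norm := module) hy
  set W := ‖p - q‖ with hW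
  set Z := ‖r - s‖ with hZ
  -- distances from x
  have hdpx : dist p x = b * W := by
    rw [dist_eq_norm, hpx, norm_smul, Real.norm_eq_abs, abs_of_pos hb]
  have hdqx : dist q x = (1-b) * W := by
    rw [dist_eq_norm, hqx, norm_smul, Real.norm_eq_abs, abs_neg, abs_of_pos ha]
  have hdrx : dist r x = (1-c) * Z := by
    rw [dist_eq_norm, hrx, norm_smul, Real.norm_eq_abs, abs_of_pos hd]
  have hdsx : dist s x = c * Z := by
    rw [dist_eq_norm, hsx, norm_smul, Real.norm_eq_abs, abs_neg, abs_of_pos hc]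
  have hdpq : dist p q = W := dist_eq_norm p q
  have hdrs : dist r s = Z := dist_eq_norm r s
  -- lower bounds on μ'
  have hm0 : 0 ≤ μ' := by rw [hμ]; positivity
  have hm1 : μ' ≤ b * W + (1-b) * W := by
    have : μ' ≤ dist p q := hμ ▸ min_le_left _ _
    rw [hdpq] at this; linarith [this]
  have hmrs : μ' ≤ (1-c) * Z + c * Z := by
    have : μ' ≤ dist r s := hμ ▸ le_trans (min_le_right _ _) (le_trans (min_le_right _ _)
      (le_trans (min_le_right _ _) (le_trans (min_le_right _ _) (min_le_right _ _))))
    rw [hdrs] at this; linarith [this]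
  have hmpr : μ' ≤ b * W + (1-c) * Z := by
    have h1 : μ' ≤ dist p r := hμ ▸ le_trans (min_le_right _ _) (min_le_left _ _)
    calc μ' ≤ dist p r := h1
      _ ≤ dist p x + dist x r := dist_triangle p x r
      _ = b * W + (1-c) * Z := by rw [dist_comm x r, hdpx, hdrx]
  have hmps : μ' ≤ b * W + c * Z := by
    have h1 : μ' ≤ dist p s := hμ ▸ le_trans (min_le_right _ _)
      (le_trans (min_le_right _ _) (min_le_left _ _))
    calc μ' ≤ dist p s := h1
      _ ≤ dist p x + dist x s := dist_triangle p x s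
      _ = b * W + c * Z := by rw [dist_comm x s, hdpx, hdsx]
  have hmqr : μ' ≤ (1-b) * W + (1-c) * Z := by
    have h1 : μ' ≤ dist q r := hμ ▸ le_trans (min_le_right _ _)
      (le_trans (min_le_right _ _) (le_trans (min_le_right _ _) (min_le_left _ _)))
    calc μ' ≤ dist q r := h1
      _ ≤ dist q x + dist x r := dist_triangle q x r
      _ = (1-b) * W + (1-c) * Z := by rw [dist_comm x r, hdqx, hdrx]
  have hmqs : μ' ≤ (1-b) * W + c * Z := by
    have h1 : μ' ≤ dist q s := hμ ▸ le_trans (min_le_right _ _)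
      (le_trans (min_le_right _ _) (le_trans (min_le_right _ _)
        (le_trans (min_le_right _ _) (min_le_left _ _))))
    calc μ' ≤ dist q s := h1
      _ ≤ dist q x + dist x s := dist_triangle q x s
      _ = (1-b) * W + c * Z := by rw [dist_comm x s, hdqx, hdsx]
  have hWn : (0:ℝ) ≤ W := norm_nonneg _
  have hZn : (0:ℝ) ≤ Z := norm_nonneg _
  have hA : 0 ≤ b * W := mul_nonneg hb.le hWn
  have hB : 0 ≤ (1-b) * W := mul_nonneg ha.le hWn
  have hC : 0 ≤ (1-c) * Z := mul_nonneg hd.le hZn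
  have hD : 0 ≤ c * Z := mul_nonneg hc.le hZn
  rcases le_total (inner ℝ (p - q) (r - s) : ℝ) 0 with ht | ht
  · -- angle case 1 : flip to ps, rq
    left
    have hps2 : dist p s ^ 2 ≤ (b*W)^2 + (c*Z)^2 := by
      rw [dist_eq_norm, hvps, stmt4.nsq]
      nlinarith [mul_nonneg (mul_pos hb hc).le (neg_nonneg.2 ht)]
    have hrq2 : dist r q ^ 2 ≤ ((1-b)*W)^2 + ((1-c)*Z)^2 := by
      rw [dist_eq_norm, hvrq, stmt4.nsq]
      nlinarith [mul_nonneg (mul_pos ha hd).le (neg_nonneg.2 ht)]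
    have hpsb : dist p s ≤ Real.sqrt ((b*W)^2 + (c*Z)^2) := by
      have := Real.sqrt_le_sqrt hps2
      rwa [Real.sqrt_sq dist_nonneg] at this
    have hrqb : dist r q ≤ Real.sqrt (((1-b)*W)^2 + ((1-c)*Z)^2) := by
      have := Real.sqrt_le_sqrt hrq2
      rwa [Real.sqrt_sq dist_nonneg] at this
    have K := stmt4.key (b*W) ((1-b)*W) ((1-c)*Z) (c*Z) μ' (dist p s) (dist r q)
      hA hB hC hD hm0 hm1 hmpr (by linarith [hmqs]) (by linarith [hmrs]) hpsb hrqb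
    rw [hdpq, hdrs]
    have hWeq : W = b*W + (1-b)*W := by ring
    have hZeq : Z = (1-c)*Z + c*Z := by ring
    linarith [K]
  · -- angle case 2 : flip to pr, qs
    right
    have hpr2 : dist p r ^ 2 ≤ (b*W)^2 + ((1-c)*Z)^2 := by
      rw [dist_eq_norm, hvpr, stmt4.nsq]
      nlinarith [mul_nonneg (mul_pos hb hd).le ht]
    have hqs2 : dist q s ^ 2 ≤ ((1-b)*W)^2 + (c*Z)^2 := by
      rw [dist_eq_norm, hvqs, stmt4.nsq]
      nlinarith [mul_nonneg (mul_pos ha hc).le ht]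
    have hprb : dist p r ≤ Real.sqrt ((b*W)^2 + ((1-c)*Z)^2) := by
      have := Real.sqrt_le_sqrt hpr2
      rwa [Real.sqrt_sq dist_nonneg] at this
    have hqsb : dist q s ≤ Real.sqrt (((1-b)*W)^2 + (c*Z)^2) := by
      have := Real.sqrt_le_sqrt hqs2
      rwa [Real.sqrt_sq dist_nonneg] at this
    have K := stmt4.key (b*W) ((1-b)*W) (c*Z) ((1-c)*Z) μ' (dist p r) (dist q s)
      hA hB hD hC hm0 hm1 hmps (by linarith [hmqr]) (by linarith [hmrs]) hprb hqsb
    rw [hdpq, hdrs]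
    linarith [K]
end
end

section
/- Let o, p, r, r' be points in ℝ² with r, r', p distinct from o, such that |or| = |or'|, the angle ∠r'or is at most π/6, and the angle ∠r'op equals π/2. Then |r'p| > |rp|/2. -/
/-!
By the triangle inequality `|rp| ≤ |rr'| + |r'p|`. The apex angle of the isosceles triangle
`r o r'` is below `π/3`, so its base `|rr'|` is shorter than its legs `|or'|`; and `|or'|` is a leg
of the triangle `r' o p`, right-angled at `o`, so it is at most the hypotenuse `|r'p|`.
-/

open EuclideanGeometry Real

noncomputable section

namespace EuclideanGeometry

variable {V P : Type*} [NormedAddCommGroup V] [InnerProductSpace ℝ V] [MetricSpace P]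
  [NormedAddTorsor V P]

theorem dist_le_dist_of_angle_eq_pi_div_two {a o b : P} (h : ∠ a o b = π / 2) :
    dist a o ≤ dist a b := by
  have hpyth := (dist_sq_eq_dist_sq_add_dist_sq_iff_angle_eq_pi_div_two a o b).mpr h
  exact (mul_self_le_mul_self_iff dist_nonneg dist_nonneg).mpr
    (by nlinarith [mul_self_nonneg (dist b o)])

theorem dist_lt_dist_of_dist_eq_of_angle_lt_pi_div_three {a o b : P} (ha : a ≠ o)
    (hab : dist a o = dist b o) (h : ∠ a o b < π / 3) : dist a b < dist a o := by
  have hcos : 1 / 2 < cos (∠ a o b) := by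
    rw [← cos_pi_div_three]
    exact cos_lt_cos_of_nonneg_of_le_pi (angle_nonneg a o b) (by linarith [pi_pos]) h
  have hd : 0 < dist a o := dist_pos.mpr ha
  have hcosine := law_cos a o b
  rw [← hab] at hcosine
  nlinarith [dist_nonneg (x := a) (y := b), mul_pos hd hd]

end EuclideanGeometry

theorem stmt5_general (o p r r' : Pt) (hr' : r' ≠ o)
    (hlen : dist o r = dist o r')
    (hangle₁ : ∠ r' o r ≤ π / 6)
    (hangle₂ : ∠ r' o p = π / 2) :
    dist r' p > dist r p / 2 := by
  have hbase : dist r' r < dist r' o :=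
    dist_lt_dist_of_dist_eq_of_angle_lt_pi_div_three hr'
      (by rw [dist_comm r' o, dist_comm r o, hlen]) (by linarith [pi_pos])
  have hleg : dist r' o ≤ dist r' p := dist_le_dist_of_angle_eq_pi_div_two hangle₂
  linarith [dist_triangle r r' p, dist_comm r r']

/-- If `|or| = |or'|`, `∠r'or ≤ π/6` and `∠r'op = π/2` (with
`r, r', p ≠ o`), then `|r'p| > |rp|/2`. -/
theorem stmt5 (o p r r' : Pt) (hr : r ≠ o) (hr' : r' ≠ o) (hp : p ≠ o)
    (hlen : dist o r = dist o r')
    (hangle₁ : ∠ r' o r ≤ π / 6)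
    (hangle₂ : ∠ r' o p = π / 2) :
    dist r' p > dist r p / 2 :=
  stmt5_general o p r r' hr' hlen hangle₁ hangle₂
end
end

section
/- Let M be a perfect matching on a set P of n points in the plane in convex position (and in general position). Then every sequence M = M₀, M₁, …, M_k of perfect matchings on P, in which each M_{i+1} is obtained from M_i by a single flip, has length k at most C(n/2, 2) = (n/2)(n/2 − 1)/2; that is, F(M) ≤ C(n/2, 2). -/
open EuclideanGeometry Real

noncomputable section

/-! ### Auxiliary geometry: a determinant functional -/

open scoped Classical

/-- Twice the signed area of the triangle `x y z`. -/
noncomputable def detf (x y z : Pt) : ℝ :=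
  (y 0 - x 0) * (z 1 - x 1) - (y 1 - x 1) * (z 0 - x 0)

lemma pt_ext {x y : Pt} (h0 : x 0 = y 0) (h1 : x 1 = y 1) : x = y := by
  apply PiLp.ext; intro i; fin_cases i <;> assumption

@[simp] lemma detf_left (x y : Pt) : detf x y x = 0 := by simp [detf]

@[simp] lemma detf_right (x y : Pt) : detf x y y = 0 := by simp [detf]; ring

lemma detf_comb (x y z w : Pt) {u v : ℝ} (h : u + v = 1) :
    detf x y (u • z + v • w) = u * detf x y z + v * detf x y w := by
  have hv : v = 1 - u := by linarith
  subst hv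
  simp only [detf, PiLp.add_apply, PiLp.smul_apply, smul_eq_mul]
  ring

lemma detf_zero_param {x y z : Pt} (h : x ≠ y) (h0 : detf x y z = 0) :
    ∃ t : ℝ, z = x + t • (y - x) := by
  have hne : y 0 - x 0 ≠ 0 ∨ y 1 - x 1 ≠ 0 := by
    by_contra hc
    push_neg at hc
    exact h (pt_ext (by linarith [hc.1]) (by linarith [hc.2])).symm
  unfold detf at h0
  rcases hne with hh | hh
  · refine ⟨(z 0 - x 0) / (y 0 - x 0), pt_ext ?_ ?_⟩ <;>
      simp only [PiLp.add_apply, PiLp.smul_apply, PiLp.sub_apply, smul_eq_mul] <;>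
      field_simp <;> nlinarith [h0]
  · refine ⟨(z 1 - x 1) / (y 1 - x 1), pt_ext ?_ ?_⟩ <;>
      simp only [PiLp.add_apply, PiLp.smul_apply, PiLp.sub_apply, smul_eq_mul] <;>
      field_simp <;> nlinarith [h0]

lemma detf_zero_collinear {x y z : Pt} (h : x ≠ y) (h0 : detf x y z = 0) :
    Collinear ℝ ({x, y, z} : Set Pt) := by
  obtain ⟨t, rfl⟩ := detf_zero_param h h0
  rw [collinear_iff_of_mem (Set.mem_insert x {y, x + t • (y - x)})]
  refine ⟨y - x, ?_⟩
  rintro p (rfl | rfl | rfl)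
  · exact ⟨0, by simp⟩
  · exact ⟨1, by rw [vadd_eq_add]; module⟩
  · exact ⟨t, by rw [vadd_eq_add]; module⟩

lemma collinear_of_mem_openSegment {p q o : Pt} (hpq : p ≠ q) (h : o ∈ openSegment ℝ p q) :
    Collinear ℝ ({p, q, o} : Set Pt) := by
  obtain ⟨u, v, hu, hv, huv, rfl⟩ := h
  exact detf_zero_collinear hpq (by rw [detf_comb _ _ _ _ huv]; simp)

/-! ### Convex position -/

lemma beyond_aux {P : Set Pt} {x y z : Pt} (hx : x ∈ P) (hy : y ∈ P) (hxy : x ≠ y)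
    (hz : z ∈ convexHull ℝ P) {t : ℝ} (ht : 1 < t) (hzt : z = x + t • (y - x)) :
    y ∈ convexHull ℝ (P \ {y}) := by
  have hxy' : x ∈ P \ {y} := ⟨hx, by simpa using hxy⟩
  have hne : (P \ {y}).Nonempty := ⟨x, hxy'⟩
  have hP : P = insert y (P \ {y}) := by
    rw [Set.insert_diff_singleton, Set.insert_eq_self.2 hy]
  rw [hP, convexHull_insert hne, mem_convexJoin] at hz
  obtain ⟨y', hy', w, hw, hzseg⟩ := hz
  rw [Set.mem_singleton_iff] at hy'
  rw [hy'] at hzseg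
  obtain ⟨μ, ν, hμ, hν, hμν, hcomb⟩ := hzseg
  have hzx : μ • y + ν • w = x + t • (y - x) := hcomb.trans hzt
  have ht0 : (0:ℝ) < t := by linarith
  have hyeq : (t - μ) • y = (t - 1) • x + ν • w := by
    linear_combination (norm := module) (-1 : ℝ) • hzx
  set c : ℝ := t - μ with hc
  have hcpos : 0 < c := by simp only [hc]; linarith
  have hy2 : y = (c⁻¹ * (t - 1)) • x + (c⁻¹ * ν) • w := by
    rw [mul_smul, mul_smul, ← smul_add, ← hyeq, smul_smul, inv_mul_cancel₀ (ne_of_gt hcpos),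
      one_smul]
  have hsum : (c⁻¹ * (t - 1)) + (c⁻¹ * ν) = 1 := by
    rw [← mul_add]
    have h3 : (t - 1) + ν = c := by simp only [hc]; linarith
    rw [h3, inv_mul_cancel₀ (ne_of_gt hcpos)]
  have hxw : y ∈ segment ℝ x w := by
    refine ⟨c⁻¹ * (t - 1), c⁻¹ * ν, ?_, ?_, hsum, hy2.symm⟩
    · have h4 : (0:ℝ) < t - 1 := by linarith
      positivity
    · positivity
  exact (convex_convexHull ℝ _).segment_subset (subset_convexHull ℝ _ hxy') hw hxw

lemma param_mem_unit {P : Set Pt} (hcv : ConvexPos P) {x y z : Pt} (hx : x ∈ P) (hy : y ∈ P)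
    (hxy : x ≠ y) (hz : z ∈ convexHull ℝ P) {t : ℝ} (hzt : z = x + t • (y - x)) :
    0 ≤ t ∧ t ≤ 1 := by
  constructor
  · by_contra h
    push_neg at h
    have h1t : (1:ℝ) < 1 - t := by linarith
    have h5 : z = y + (1 - t) • (x - y) := by rw [hzt]; module
    exact hcv x hx (beyond_aux hy hx hxy.symm hz h1t h5)
  · by_contra h
    push_neg at h
    exact hcv y hy (beyond_aux hx hy hxy hz h hzt)

/-! ### Signs and crossings -/

lemma detf_ne_zero {P : Finset Pt} (hgp : GenPos ↑P) {x y z : Pt} (hx : x ∈ P) (hy : y ∈ P)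
    (hz : z ∈ P) (hxy : x ≠ y) (hxz : x ≠ z) (hyz : y ≠ z) : detf x y z ≠ 0 :=
  fun h0 => hgp x (by exact_mod_cast hx) y (by exact_mod_cast hy) z (by exact_mod_cast hz)
    hxy hxz hyz (detf_zero_collinear hxy h0)

lemma sign_of_cross {P : Finset Pt} (hgp : GenPos ↑P) {x y p q : Pt}
    (hx : x ∈ P) (hy : y ∈ P) (hp : p ∈ P) (hq : q ∈ P)
    (h : SegCross p q x y) : detf x y p * detf x y q < 0 := by
  obtain ⟨hpq, hpx, hpy, hqx, hqy, hxy, o, ho1, ho2⟩ := h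
  obtain ⟨u, v, hu, hv, huv, hcomb⟩ := ho1
  obtain ⟨u', v', hu', hv', huv', hcomb'⟩ := ho2
  have hfo : detf x y o = 0 := by
    rw [← hcomb', detf_comb _ _ _ _ huv', detf_left, detf_right]; ring
  have heq : u * detf x y p + v * detf x y q = 0 := by
    rw [← detf_comb _ _ _ _ huv, hcomb, hfo]
  have hfp := detf_ne_zero hgp hx hy hp hxy (Ne.symm hpx) (Ne.symm hpy)
  have hfq := detf_ne_zero hgp hx hy hq hxy (Ne.symm hqx) (Ne.symm hqy)
  have h7 : u * (detf x y p * detf x y q) = -(v * (detf x y q)^2) := by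
    linear_combination detf x y q * heq
  have h8 : 0 < (detf x y q)^2 := by positivity
  nlinarith [h7, h8, mul_pos hv h8]

lemma cross_of_sign {P : Finset Pt} (hgp : GenPos ↑P) (hcv : ConvexPos ↑P) {x y p q : Pt}
    (hx : x ∈ P) (hy : y ∈ P) (hp : p ∈ P) (hq : q ∈ P)
    (hxy : x ≠ y) (hpq : p ≠ q) (hpx : p ≠ x) (hpy : p ≠ y) (hqx : q ≠ x) (hqy : q ≠ y)
    (hs : detf x y p * detf x y q < 0) : SegCross p q x y := by
  set A := detf x y p with hA
  set B := detf x y q with hB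
  have hA0 : A ≠ 0 := detf_ne_zero hgp hx hy hp hxy hpx.symm hpy.symm
  have hB0 : B ≠ 0 := detf_ne_zero hgp hx hy hq hxy hqx.symm hqy.symm
  have hd : B - A ≠ 0 := by
    intro h; rw [sub_eq_zero] at h; rw [← h] at hs; nlinarith [sq_nonneg B]
  set lam : ℝ := B / (B - A) with hlam
  have hl0 : 0 < lam := by
    rcases lt_or_gt_of_ne hB0 with hBneg | hBpos
    · have hApos : 0 < A := by nlinarith
      exact div_pos_of_neg_of_neg hBneg (by linarith)
    · have hAneg : A < 0 := by nlinarith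
      exact div_pos hBpos (by linarith)
  have hrw : 1 - lam = -A / (B - A) := by rw [hlam]; field_simp; ring
  have hl1' : 0 < 1 - lam := by
    rw [hrw]
    rcases lt_or_gt_of_ne hB0 with hBneg | hBpos
    · have hApos : 0 < A := by nlinarith
      exact div_pos_of_neg_of_neg (by linarith) (by linarith)
    · have hAneg : A < 0 := by nlinarith
      exact div_pos (by linarith) (by linarith)
  have hl1 : lam < 1 := by linarith
  set z : Pt := lam • p + (1 - lam) • q with hz
  have hzpq : z ∈ openSegment ℝ p q := ⟨lam, 1 - lam, hl0, by linarith, by ring, rfl⟩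
  have hfz : detf x y z = 0 := by
    rw [hz, detf_comb _ _ _ _ (by ring : lam + (1 - lam) = 1), ← hA, ← hB, hlam]
    field_simp
    ring
  obtain ⟨t, hzt⟩ := detf_zero_param hxy hfz
  have hzhull : z ∈ convexHull ℝ (↑P : Set Pt) := by
    have hseg : z ∈ segment ℝ p q := openSegment_subset_segment ℝ p q hzpq
    exact (convex_convexHull ℝ _).segment_subset
      (subset_convexHull ℝ _ (by exact_mod_cast hp))
      (subset_convexHull ℝ _ (by exact_mod_cast hq)) hseg
  obtain ⟨ht0, ht1⟩ := param_mem_unit hcv (by exact_mod_cast hx) (by exact_mod_cast hy) hxy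
    hzhull hzt
  have htne0 : t ≠ 0 := by
    rintro rfl
    simp only [zero_smul, add_zero] at hzt
    exact hgp p (by exact_mod_cast hp) q (by exact_mod_cast hq) x (by exact_mod_cast hx)
      hpq hpx hqx (by rw [← hzt]; exact collinear_of_mem_openSegment hpq hzpq)
  have htne1 : t ≠ 1 := by
    rintro rfl
    have hzy : z = y := by rw [hzt]; module
    exact hgp p (by exact_mod_cast hp) q (by exact_mod_cast hq) y (by exact_mod_cast hy)
      hpq hpy hqy (by rw [← hzy]; exact collinear_of_mem_openSegment hpq hzpq)
  have hzxy : z ∈ openSegment ℝ x y := by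
    have htlt1 : t < 1 := lt_of_le_of_ne ht1 htne1
    have htgt0 : 0 < t := lt_of_le_of_ne ht0 (Ne.symm htne0)
    refine ⟨1 - t, t, by linarith, htgt0, by ring, ?_⟩
    rw [hzt]; module
  exact ⟨hpq, hpx, hpy, hqx, hqy, hxy, z, hzpq, hzxy⟩

lemma not_cross_flip {P : Finset Pt} (hgp : GenPos ↑P) {a b c d : Pt}
    (ha : a ∈ P) (hb : b ∈ P) (hc : c ∈ P) (hd : d ∈ P)
    (h : SegCross a b c d) : ¬ SegCross a c b d := by
  rintro ⟨-, -, -, -, -, -, o', ho1', ho2'⟩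
  obtain ⟨hab, hac, had, hbc, hbd, hcd, o, ho1, ho2⟩ := h
  have hC : detf a b c ≠ 0 := detf_ne_zero hgp ha hb hc hab hac hbc
  have hD : detf a b d ≠ 0 := detf_ne_zero hgp ha hb hd hab had hbd
  obtain ⟨u1, v1, hu1, hv1, huv1, hc1⟩ := ho1
  obtain ⟨u2, v2, hu2, hv2, huv2, hc2⟩ := ho2
  obtain ⟨u3, v3, hu3, hv3, huv3, hc3⟩ := ho1'
  obtain ⟨u4, v4, hu4, hv4, huv4, hc4⟩ := ho2'
  have e1 : u2 * detf a b c + v2 * detf a b d = 0 := by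
    rw [← detf_comb _ _ _ _ huv2, hc2, ← hc1, detf_comb _ _ _ _ huv1, detf_left, detf_right]
    ring
  have e2 : v3 * detf a b c - v4 * detf a b d = 0 := by
    have h3 : detf a b o' = v3 * detf a b c := by
      rw [← hc3, detf_comb _ _ _ _ huv3, detf_left]; ring
    have h4 : detf a b o' = v4 * detf a b d := by
      rw [← hc4, detf_comb _ _ _ _ huv4, detf_right]; ring
    rw [← h3, h4]; ring
  have h9 : detf a b d * (v2 * v3 + u2 * v4) = 0 := by
    linear_combination v3 * e1 - u2 * e2
  exact mul_ne_zero hD (by positivity) h9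

/-! ### Symmetries of crossing -/

lemma SegCross.swapP {a b c d : Pt} (h : SegCross a b c d) : SegCross c d a b := by
  obtain ⟨h1, h2, h3, h4, h5, h6, o, ho1, ho2⟩ := h
  exact ⟨h6, h2.symm, h4.symm, h3.symm, h5.symm, h1, o, ho2, ho1⟩

lemma SegCross.swapL {a b c d : Pt} (h : SegCross a b c d) : SegCross b a c d := by
  obtain ⟨h1, h2, h3, h4, h5, h6, o, ho1, ho2⟩ := h
  exact ⟨h1.symm, h4, h5, h2, h3, h6, o, by rwa [openSegment_symm], ho2⟩

lemma SegCross.swapR {a b c d : Pt} (h : SegCross a b c d) : SegCross a b d c := by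
  obtain ⟨h1, h2, h3, h4, h5, h6, o, ho1, ho2⟩ := h
  exact ⟨h1, h3, h2, h5, h4, h6.symm, o, ho1, by rwa [openSegment_symm]⟩

lemma edgeCross_iff {a b c d : Pt} : EdgeCross s(a, b) s(c, d) ↔ SegCross a b c d := by
  constructor
  · rintro ⟨a', b', c', d', h1, h2, h3⟩
    rcases Sym2.eq_iff.1 h1 with ⟨rfl, rfl⟩ | ⟨rfl, rfl⟩ <;>
      rcases Sym2.eq_iff.1 h2 with ⟨rfl, rfl⟩ | ⟨rfl, rfl⟩
    exacts [h3, h3.swapR, h3.swapL, h3.swapL.swapR]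
  · exact fun h => ⟨a, b, c, d, rfl, rfl, h⟩

lemma EdgeCross.symm {e f : Sym2 Pt} (h : EdgeCross e f) : EdgeCross f e := by
  obtain ⟨a, b, c, d, rfl, rfl, h3⟩ := h
  exact ⟨c, d, a, b, rfl, rfl, h3.swapP⟩

lemma EdgeCross.ne {e f : Sym2 Pt} (h : EdgeCross e f) : e ≠ f := by
  obtain ⟨a, b, c, d, rfl, rfl, h3⟩ := h
  intro he
  rcases Sym2.eq_iff.1 he with ⟨h1, -⟩ | ⟨h1, -⟩
  · exact h3.2.1 h1
  · exact h3.2.2.1 h1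

/-! ### Counting crossings -/

/-- crossing indicator -/
noncomputable def crN (e f : Sym2 Pt) : ℕ := if EdgeCross e f then 1 else 0

lemma crN_self (e : Sym2 Pt) : crN e e = 0 := if_neg (fun h => h.ne rfl)

lemma crN_symm (e f : Sym2 Pt) : crN e f = crN f e := by
  unfold crN
  by_cases h : EdgeCross e f
  · rw [if_pos h, if_pos h.symm]
  · rw [if_neg h, if_neg (fun h' => h h'.symm)]

lemma crN_le_one (e f : Sym2 Pt) : crN e f ≤ 1 := by
  unfold crN; split_ifs <;> omega

/-- total (ordered) crossing count of a finite edge set -/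
noncomputable def Xc (E : Finset (Sym2 Pt)) : ℕ := ∑ e ∈ E, ∑ f ∈ E, crN e f

lemma Xc_union {O T : Finset (Sym2 Pt)} (h : Disjoint O T) :
    Xc (O ∪ T) = Xc O + Xc T + 2 * ∑ e ∈ O, ∑ f ∈ T, crN e f := by
  unfold Xc
  rw [Finset.sum_union h]
  have hrow : ∀ S : Finset (Sym2 Pt), ∀ e,
      ∑ f ∈ O ∪ T, crN e f = ∑ f ∈ O, crN e f + ∑ f ∈ T, crN e f :=
    fun S e => Finset.sum_union h
  simp only [hrow O]
  rw [Finset.sum_add_distrib, Finset.sum_add_distrib]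
  have hsw : ∑ e ∈ T, ∑ f ∈ O, crN e f = ∑ e ∈ O, ∑ f ∈ T, crN e f := by
    rw [Finset.sum_comm]
    congr 1
    ext e
    congr 1
    ext f
    exact crN_symm f e
  rw [hsw]
  ring

lemma Xc_pair {u v : Sym2 Pt} (h : u ≠ v) :
    Xc {u, v} = crN u u + crN u v + (crN v u + crN v v) := by
  unfold Xc
  rw [Finset.sum_pair h, Finset.sum_pair h, Finset.sum_pair h]

lemma Xc_le (E : Finset (Sym2 Pt)) : Xc E ≤ E.card * (E.card - 1) := by
  unfold Xc
  have h1 : ∀ e ∈ E, ∑ f ∈ E, crN e f ≤ E.card - 1 := by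
    intro e he
    rw [← Finset.sum_erase_add E _ he, crN_self, add_zero]
    calc ∑ f ∈ E.erase e, crN e f ≤ ∑ f ∈ E.erase e, 1 :=
          Finset.sum_le_sum (fun f _ => crN_le_one e f)
      _ = (E.erase e).card := by rw [Finset.sum_const, smul_eq_mul, mul_one]
      _ = E.card - 1 := Finset.card_erase_of_mem he
  calc ∑ e ∈ E, ∑ f ∈ E, crN e f ≤ ∑ _e ∈ E, (E.card - 1) := Finset.sum_le_sum h1
    _ = E.card * (E.card - 1) := by rw [Finset.sum_const, smul_eq_mul]

set_option maxHeartbeats 1000000 in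
lemma sign_count (A B C D : ℝ) (hA : A ≠ 0) (hB : B ≠ 0) (hC : C ≠ 0) (hD : D ≠ 0)
    (h : 0 < A * B → 0 < C * D → 0 < A * C) :
    (if A * C < 0 then 1 else 0) + (if B * D < 0 then 1 else 0) ≤
      (if A * B < 0 then 1 else 0) + (if C * D < 0 then 1 else 0) := by
  rcases lt_or_gt_of_ne hA with ha | ha <;>
  rcases lt_or_gt_of_ne hB with hb | hb <;>
  rcases lt_or_gt_of_ne hC with hc | hc <;>
  rcases lt_or_gt_of_ne hD with hd | hd <;>
  split_ifs <;>
  first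
    | (norm_num; done)
    | (exfalso; first | nlinarith | nlinarith [h (by nlinarith) (by nlinarith)])

/-- the key per-edge inequality -/
lemma key_ineq {P : Finset Pt} (hgp : GenPos ↑P) (hcv : ConvexPos ↑P) {a b c d x y : Pt}
    (haP : a ∈ P) (hbP : b ∈ P) (hcP : c ∈ P) (hdP : d ∈ P) (hxP : x ∈ P) (hyP : y ∈ P)
    (hxy : x ≠ y)
    (hax : a ≠ x) (hay : a ≠ y) (hbx : b ≠ x) (hby : b ≠ y)
    (hcx : c ≠ x) (hcy : c ≠ y) (hdx : d ≠ x) (hdy : d ≠ y)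
    (hcr : SegCross a b c d) :
    crN s(x, y) s(a, c) + crN s(x, y) s(b, d) ≤ crN s(x, y) s(a, b) + crN s(x, y) s(c, d) := by
  have hab := hcr.1
  have hac := hcr.2.1
  have had := hcr.2.2.1
  have hbc := hcr.2.2.2.1
  have hbd := hcr.2.2.2.2.1
  have hcd := hcr.2.2.2.2.2.1
  have hiff : ∀ p q : Pt, p ∈ P → q ∈ P → p ≠ q → p ≠ x → p ≠ y → q ≠ x → q ≠ y →
      (EdgeCross s(x, y) s(p, q) ↔ detf x y p * detf x y q < 0) := by
    intro p q hp hq hpq hpx hpy hqx hqy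
    constructor
    · intro h
      exact sign_of_cross hgp hxP hyP hp hq (edgeCross_iff.1 h).swapP
    · intro h
      exact edgeCross_iff.2
        (cross_of_sign hgp hcv hxP hyP hp hq hxy hpq hpx hpy hqx hqy h).swapP
  have hfa : detf x y a ≠ 0 := detf_ne_zero hgp hxP hyP haP hxy hax.symm hay.symm
  have hfb : detf x y b ≠ 0 := detf_ne_zero hgp hxP hyP hbP hxy hbx.symm hby.symm
  have hfc : detf x y c ≠ 0 := detf_ne_zero hgp hxP hyP hcP hxy hcx.symm hcy.symm
  have hfd : detf x y d ≠ 0 := detf_ne_zero hgp hxP hyP hdP hxy hdx.symm hdy.symm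
  have hkey : 0 < detf x y a * detf x y b → 0 < detf x y c * detf x y d →
      0 < detf x y a * detf x y c := by
    intro h1 h2
    obtain ⟨-, -, -, -, -, -, o, ho1, ho2⟩ := hcr
    obtain ⟨u1, v1, hu1, hv1, huv1, hc1⟩ := ho1
    obtain ⟨u2, v2, hu2, hv2, huv2, hc2⟩ := ho2
    have e1 : detf x y o = u1 * detf x y a + v1 * detf x y b := by
      rw [← hc1, detf_comb _ _ _ _ huv1]
    have e2 : detf x y o = u2 * detf x y c + v2 * detf x y d := by
      rw [← hc2, detf_comb _ _ _ _ huv2]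
    have hfa2 : 0 < (detf x y a)^2 := by positivity
    have hfc2 : 0 < (detf x y c)^2 := by positivity
    have hp1 : 0 < detf x y a * detf x y o := by
      rw [e1]; nlinarith [mul_pos hu1 hfa2, mul_pos hv1 h1]
    have hp2 : 0 < detf x y c * detf x y o := by
      rw [e2]; nlinarith [mul_pos hu2 hfc2, mul_pos hv2 h2]
    have hfo : detf x y o ≠ 0 := by
      intro h; rw [h, mul_zero] at hp1; exact lt_irrefl _ hp1
    have hfo2 : 0 < (detf x y o)^2 := by positivity
    nlinarith [mul_pos hp1 hp2, hfo2]
  unfold crN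
  rw [if_congr (hiff a c haP hcP hac hax hay hcx hcy) rfl rfl,
    if_congr (hiff b d hbP hdP hbd hbx hby hdx hdy) rfl rfl,
    if_congr (hiff a b haP hbP hab hax hay hbx hby) rfl rfl,
    if_congr (hiff c d hcP hdP hcd hcx hcy hdx hdy) rfl rfl]
  exact sign_count _ _ _ _ hfa hfb hfc hfd hkey


/-! ### Matchings as finsets -/

/-- the edges of `M` as a finset -/
noncomputable def Mfin (P : Finset Pt) (M : Set (Sym2 Pt)) : Finset (Sym2 Pt) :=
  P.sym2.filter (· ∈ M)

lemma mem_Mfin {P : Finset Pt} {M : Set (Sym2 Pt)} (hM : IsPM P M) (e : Sym2 Pt) :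
    e ∈ Mfin P M ↔ e ∈ M := by
  rw [Mfin, Finset.mem_filter]
  refine ⟨And.right, fun he => ⟨?_, he⟩⟩
  induction e using Sym2.ind with
  | _ x y =>
    exact Finset.mk_mem_sym2_iff.2
      ⟨hM.2.1 _ he x (Sym2.mem_mk_left x y), hM.2.1 _ he y (Sym2.mem_mk_right x y)⟩

/-- the points of an edge, as a finset -/
noncomputable def epts : Sym2 Pt → Finset Pt :=
  Sym2.lift ⟨fun p q => {p, q}, fun p q => Finset.pair_comm p q⟩

lemma mem_epts {z : Pt} {e : Sym2 Pt} : z ∈ epts e ↔ z ∈ e := by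
  induction e using Sym2.ind with
  | _ x y =>
    rw [epts, Sym2.lift_mk]
    simp [Sym2.mem_iff]

lemma card_Mfin {P : Finset Pt} {M : Set (Sym2 Pt)} (hM : IsPM P M) :
    2 * (Mfin P M).card ≤ P.card := by
  have hsub : (Mfin P M).biUnion epts ⊆ P := by
    intro z hz
    rw [Finset.mem_biUnion] at hz
    obtain ⟨e, he, hze⟩ := hz
    exact hM.2.1 e ((mem_Mfin hM e).1 he) z (mem_epts.1 hze)
  have hdisj : (↑(Mfin P M) : Set (Sym2 Pt)).PairwiseDisjoint epts := by
    intro e he f hf hef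
    refine Finset.disjoint_left.2 (fun z hze hzf => hef ?_)
    have heM := (mem_Mfin hM e).1 (Finset.mem_coe.1 he)
    have hfM := (mem_Mfin hM f).1 (Finset.mem_coe.1 hf)
    have hzP : z ∈ P := hM.2.1 e heM z (mem_epts.1 hze)
    obtain ⟨E, -, hEu⟩ := hM.2.2 z hzP
    rw [hEu e ⟨heM, mem_epts.1 hze⟩, hEu f ⟨hfM, mem_epts.1 hzf⟩]
  have hcards : ∑ e ∈ Mfin P M, (epts e).card = ((Mfin P M).biUnion epts).card :=
    (Finset.card_biUnion hdisj).symm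
  have h2 : ∀ e ∈ Mfin P M, (epts e).card = 2 := by
    intro e he
    have hnd := hM.1 e ((mem_Mfin hM e).1 he)
    induction e using Sym2.ind with
    | _ x y =>
      rw [Sym2.mk_isDiag_iff] at hnd
      rw [epts, Sym2.lift_mk]
      exact Finset.card_pair hnd
  calc 2 * (Mfin P M).card = ∑ _e ∈ Mfin P M, 2 := by
        rw [Finset.sum_const, smul_eq_mul, mul_comm]
    _ = ∑ e ∈ Mfin P M, (epts e).card := (Finset.sum_congr rfl h2).symm
    _ = ((Mfin P M).biUnion epts).card := hcards
    _ ≤ P.card := Finset.card_le_card hsub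

/-! ### The flip step -/

lemma flip_main {P : Finset Pt} (hgp : GenPos ↑P) (hcv : ConvexPos ↑P)
    {M : Set (Sym2 Pt)} (hM : IsPM P M) {a b c d : Pt}
    (hab : s(a, b) ∈ M) (hcd : s(c, d) ∈ M) (hx : SegCross a b c d) :
    IsPM P ((M \ {s(a, b), s(c, d)}) ∪ {s(a, c), s(b, d)}) ∧
      Xc (Mfin P ((M \ {s(a, b), s(c, d)}) ∪ {s(a, c), s(b, d)})) + 2 ≤ Xc (Mfin P M) := by
  set N : Set (Sym2 Pt) := (M \ {s(a, b), s(c, d)}) ∪ {s(a, c), s(b, d)} with hN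
  have hab' := hx.1
  have hac := hx.2.1
  have had := hx.2.2.1
  have hbc := hx.2.2.2.1
  have hbd := hx.2.2.2.2.1
  have hcd' := hx.2.2.2.2.2.1
  have haP : a ∈ P := hM.2.1 _ hab a (Sym2.mem_mk_left a b)
  have hbP : b ∈ P := hM.2.1 _ hab b (Sym2.mem_mk_right a b)
  have hcP : c ∈ P := hM.2.1 _ hcd c (Sym2.mem_mk_left c d)
  have hdP : d ∈ P := hM.2.1 _ hcd d (Sym2.mem_mk_right c d)
  have edge_a : ∀ e ∈ M, a ∈ e → e = s(a, b) := by
    intro e he hae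
    obtain ⟨E, -, hEu⟩ := hM.2.2 a haP
    rw [hEu e ⟨he, hae⟩, hEu s(a, b) ⟨hab, Sym2.mem_mk_left a b⟩]
  have edge_b : ∀ e ∈ M, b ∈ e → e = s(a, b) := by
    intro e he hbe
    obtain ⟨E, -, hEu⟩ := hM.2.2 b hbP
    rw [hEu e ⟨he, hbe⟩, hEu s(a, b) ⟨hab, Sym2.mem_mk_right a b⟩]
  have edge_c : ∀ e ∈ M, c ∈ e → e = s(c, d) := by
    intro e he hce
    obtain ⟨E, -, hEu⟩ := hM.2.2 c hcP
    rw [hEu e ⟨he, hce⟩, hEu s(c, d) ⟨hcd, Sym2.mem_mk_left c d⟩]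
  have edge_d : ∀ e ∈ M, d ∈ e → e = s(c, d) := by
    intro e he hde
    obtain ⟨E, -, hEu⟩ := hM.2.2 d hdP
    rw [hEu e ⟨he, hde⟩, hEu s(c, d) ⟨hcd, Sym2.mem_mk_right c d⟩]
  have hNmem : ∀ e, e ∈ N ↔ (e ∈ M ∧ e ≠ s(a, b) ∧ e ≠ s(c, d)) ∨ e = s(a, c) ∨ e = s(b, d) := by
    intro e
    simp only [hN, Set.mem_union, Set.mem_diff, Set.mem_insert_iff, Set.mem_singleton_iff]
    tauto
  have hNpm : IsPM P N := by
    refine ⟨?_, ?_, ?_⟩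
    · intro e he
      rcases (hNmem e).1 he with ⟨heM, -, -⟩ | rfl | rfl
      · exact hM.1 e heM
      · rw [Sym2.mk_isDiag_iff]; exact hac
      · rw [Sym2.mk_isDiag_iff]; exact hbd
    · intro e he p hp
      rcases (hNmem e).1 he with ⟨heM, -, -⟩ | rfl | rfl
      · exact hM.2.1 e heM p hp
      · rcases Sym2.mem_iff.1 hp with rfl | rfl
        exacts [haP, hcP]
      · rcases Sym2.mem_iff.1 hp with rfl | rfl
        exacts [hbP, hdP]
    · intro p hpP
      by_cases hpa : p = a
      · subst hpa
        refine ⟨s(p, c), ⟨(hNmem _).2 (Or.inr (Or.inl rfl)), Sym2.mem_mk_left p c⟩, ?_⟩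
        rintro e' ⟨he', hpe'⟩
        rcases (hNmem e').1 he' with ⟨heM, hne1, -⟩ | rfl | rfl
        · exact absurd (edge_a e' heM hpe') hne1
        · rfl
        · rcases Sym2.mem_iff.1 hpe' with h | h
          exacts [absurd h hab', absurd h had]
      by_cases hpb : p = b
      · subst hpb
        refine ⟨s(p, d), ⟨(hNmem _).2 (Or.inr (Or.inr rfl)), Sym2.mem_mk_left p d⟩, ?_⟩
        rintro e' ⟨he', hpe'⟩
        rcases (hNmem e').1 he' with ⟨heM, hne1, -⟩ | rfl | rfl
        · exact absurd (edge_b e' heM hpe') hne1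
        · rcases Sym2.mem_iff.1 hpe' with h | h
          exacts [absurd h (Ne.symm hab'), absurd h hbc]
        · rfl
      by_cases hpc : p = c
      · subst hpc
        refine ⟨s(a, p), ⟨(hNmem _).2 (Or.inr (Or.inl rfl)), Sym2.mem_mk_right a p⟩, ?_⟩
        rintro e' ⟨he', hpe'⟩
        rcases (hNmem e').1 he' with ⟨heM, -, hne2⟩ | rfl | rfl
        · exact absurd (edge_c e' heM hpe') hne2
        · rfl
        · rcases Sym2.mem_iff.1 hpe' with h | h
          exacts [absurd h (Ne.symm hbc), absurd h hcd']
      by_cases hpd : p = d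
      · subst hpd
        refine ⟨s(b, p), ⟨(hNmem _).2 (Or.inr (Or.inr rfl)), Sym2.mem_mk_right b p⟩, ?_⟩
        rintro e' ⟨he', hpe'⟩
        rcases (hNmem e').1 he' with ⟨heM, -, hne2⟩ | rfl | rfl
        · exact absurd (edge_d e' heM hpe') hne2
        · rcases Sym2.mem_iff.1 hpe' with h | h
          exacts [absurd h (Ne.symm had), absurd h (Ne.symm hcd')]
        · rfl
      · obtain ⟨E, hE, hEu⟩ := hM.2.2 p hpP
        have hE1 : E ≠ s(a, b) := by
          intro h
          rw [h] at hE
          rcases Sym2.mem_iff.1 hE.2 with h' | h'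
          exacts [hpa h', hpb h']
        have hE2 : E ≠ s(c, d) := by
          intro h
          rw [h] at hE
          rcases Sym2.mem_iff.1 hE.2 with h' | h'
          exacts [hpc h', hpd h']
        refine ⟨E, ⟨(hNmem E).2 (Or.inl ⟨hE.1, hE1, hE2⟩), hE.2⟩, ?_⟩
        rintro e' ⟨he', hpe'⟩
        rcases (hNmem e').1 he' with ⟨heM, -, -⟩ | rfl | rfl
        · exact hEu e' ⟨heM, hpe'⟩
        · rcases Sym2.mem_iff.1 hpe' with h' | h'
          exacts [absurd h' hpa, absurd h' hpc]
        · rcases Sym2.mem_iff.1 hpe' with h' | h'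
          exacts [absurd h' hpb, absurd h' hpd]
  refine ⟨hNpm, ?_⟩
  -- now the counting
  have hne_ab_cd : s(a, b) ≠ s(c, d) := by
    intro h
    rcases Sym2.eq_iff.1 h with ⟨h1, -⟩ | ⟨h1, -⟩
    exacts [hac h1, had h1]
  have hne_ac_bd : s(a, c) ≠ s(b, d) := by
    intro h
    rcases Sym2.eq_iff.1 h with ⟨h1, -⟩ | ⟨h1, -⟩
    exacts [hab' h1, had h1]
  set O : Finset (Sym2 Pt) := Mfin P M \ {s(a, b), s(c, d)} with hOdef
  have hOmem : ∀ e ∈ O, e ∈ M ∧ e ≠ s(a, b) ∧ e ≠ s(c, d) := by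
    intro e he
    rw [hOdef, Finset.mem_sdiff, Finset.mem_insert, Finset.mem_singleton] at he
    exact ⟨(mem_Mfin hM e).1 he.1, fun h => he.2 (Or.inl h), fun h => he.2 (Or.inr h)⟩
  have hsubT : ({s(a, b), s(c, d)} : Finset (Sym2 Pt)) ⊆ Mfin P M := by
    intro e he
    rcases Finset.mem_insert.1 he with rfl | he'
    · exact (mem_Mfin hM _).2 hab
    · rw [Finset.mem_singleton.1 he']
      exact (mem_Mfin hM _).2 hcd
  have hMFeq : Mfin P M = O ∪ {s(a, b), s(c, d)} := (Finset.sdiff_union_of_subset hsubT).symm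
  have hacO : s(a, c) ∉ O := by
    intro h
    exact (hOmem _ h).2.1 (edge_a _ (hOmem _ h).1 (Sym2.mem_mk_left a c))
  have hbdO : s(b, d) ∉ O := by
    intro h
    exact (hOmem _ h).2.1 (edge_b _ (hOmem _ h).1 (Sym2.mem_mk_left b d))
  have hMFNeq : Mfin P N = O ∪ {s(a, c), s(b, d)} := by
    ext e
    rw [mem_Mfin hNpm e, hNmem e, Finset.mem_union, Finset.mem_insert, Finset.mem_singleton,
      hOdef, Finset.mem_sdiff, Finset.mem_insert, Finset.mem_singleton, mem_Mfin hM e]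
    tauto
  have hdisj1 : Disjoint O ({s(a, b), s(c, d)} : Finset (Sym2 Pt)) := Finset.sdiff_disjoint
  have hdisj2 : Disjoint O ({s(a, c), s(b, d)} : Finset (Sym2 Pt)) := by
    refine Finset.disjoint_left.2 (fun e heO he => ?_)
    rcases Finset.mem_insert.1 he with rfl | he'
    · exact hacO heO
    · rw [Finset.mem_singleton.1 he'] at heO
      exact hbdO heO
  have hXM : Xc (Mfin P M) =
      Xc O + Xc {s(a, b), s(c, d)} + 2 * ∑ e ∈ O, (crN e s(a, b) + crN e s(c, d)) := by
    rw [hMFeq, Xc_union hdisj1]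
    congr 1
    congr 1
    exact Finset.sum_congr rfl (fun e _ => Finset.sum_pair hne_ab_cd)
  have hXN : Xc (Mfin P N) =
      Xc O + Xc {s(a, c), s(b, d)} + 2 * ∑ e ∈ O, (crN e s(a, c) + crN e s(b, d)) := by
    rw [hMFNeq, Xc_union hdisj2]
    congr 1
    congr 1
    exact Finset.sum_congr rfl (fun e _ => Finset.sum_pair hne_ac_bd)
  have hT1 : Xc ({s(a, b), s(c, d)} : Finset (Sym2 Pt)) = 2 := by
    rw [Xc_pair hne_ab_cd, crN_self, crN_self]
    have h1 : crN s(a, b) s(c, d) = 1 := if_pos (edgeCross_iff.2 hx)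
    have h2 : crN s(c, d) s(a, b) = 1 := by rw [crN_symm]; exact h1
    omega
  have hT2 : Xc ({s(a, c), s(b, d)} : Finset (Sym2 Pt)) = 0 := by
    rw [Xc_pair hne_ac_bd, crN_self, crN_self]
    have h1 : crN s(a, c) s(b, d) = 0 :=
      if_neg (fun h => not_cross_flip hgp haP hbP hcP hdP hx (edgeCross_iff.1 h))
    have h2 : crN s(b, d) s(a, c) = 0 := by rw [crN_symm]; exact h1
    omega
  have hterm : ∀ e ∈ O, crN e s(a, c) + crN e s(b, d) ≤ crN e s(a, b) + crN e s(c, d) := by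
    intro e he
    obtain ⟨heM, hne1, hne2⟩ := hOmem e he
    have hnd := hM.1 e heM
    have hmemP := hM.2.1 e heM
    have hea : a ∉ e := fun h => hne1 (edge_a e heM h)
    have heb : b ∉ e := fun h => hne1 (edge_b e heM h)
    have hec : c ∉ e := fun h => hne2 (edge_c e heM h)
    have hed : d ∉ e := fun h => hne2 (edge_d e heM h)
    clear he hne1 hne2 heM
    induction e using Sym2.ind with
    | _ x y =>
      rw [Sym2.mk_isDiag_iff] at hnd
      have hxP : x ∈ P := hmemP x (Sym2.mem_mk_left x y)
      have hyP : y ∈ P := hmemP y (Sym2.mem_mk_right x y)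
      have hax : a ≠ x := fun h => hea (h ▸ Sym2.mem_mk_left x y)
      have hay : a ≠ y := fun h => hea (h ▸ Sym2.mem_mk_right x y)
      have hbx : b ≠ x := fun h => heb (h ▸ Sym2.mem_mk_left x y)
      have hby : b ≠ y := fun h => heb (h ▸ Sym2.mem_mk_right x y)
      have hcx : c ≠ x := fun h => hec (h ▸ Sym2.mem_mk_left x y)
      have hcy : c ≠ y := fun h => hec (h ▸ Sym2.mem_mk_right x y)
      have hdx : d ≠ x := fun h => hed (h ▸ Sym2.mem_mk_left x y)
      have hdy : d ≠ y := fun h => hed (h ▸ Sym2.mem_mk_right x y)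
      exact key_ineq hgp hcv haP hbP hcP hdP hxP hyP hnd hax hay hbx hby hcx hcy hdx hdy hx
  have hsum_le : ∑ e ∈ O, (crN e s(a, c) + crN e s(b, d)) ≤
      ∑ e ∈ O, (crN e s(a, b) + crN e s(c, d)) := by exact Finset.sum_le_sum hterm
  omega

/-! ### The main theorem -/

/-- For a perfect matching `M` on `n` points in convex (and general)
position, every sequence of flips starting at `M` has length at most `C(n/2, 2)`. -/
theorem stmt7 (n : ℕ) (hn : Even n) (P : Finset Pt) (hcard : P.card = n)
    (hgp : GenPos ↑P) (hcv : ConvexPos ↑P)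
    (M : Set (Sym2 Pt)) (hM : IsPM P M)
    (k : ℕ) (g : ℕ → Set (Sym2 Pt)) (hg0 : g 0 = M)
    (hflip : ∀ i < k, Flip (g i) (g (i + 1))) :
    k ≤ (n / 2).choose 2 := by
  have main : ∀ i, i ≤ k → IsPM P (g i) ∧ Xc (Mfin P (g i)) + 2 * i ≤ Xc (Mfin P (g 0)) := by
    intro i
    induction i with
    | zero => exact fun _ => ⟨hg0 ▸ hM, by omega⟩
    | succ m ih =>
      intro hm
      obtain ⟨hpm, hct⟩ := ih (by omega)
      obtain ⟨a, b, c, d, hab, hcd, hx, hM'⟩ := hflip m (by omega)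
      rcases hM' with h1 | h2
      · obtain ⟨hpm', hct'⟩ := flip_main hgp hcv hpm hab hcd hx
        rw [← h1] at hpm' hct'
        exact ⟨hpm', by omega⟩
      · have hdc : s(d, c) ∈ g m := by rwa [Sym2.eq_swap]
        obtain ⟨hpm', hct'⟩ := flip_main hgp hcv hpm hab hdc hx.swapR
        rw [show (s(d, c) : Sym2 Pt) = s(c, d) from Sym2.eq_swap] at hpm' hct'
        rw [← h2] at hpm' hct'
        exact ⟨hpm', by omega⟩
  obtain ⟨hpmk, hk⟩ := main k le_rfl
  have hb1 : Xc (Mfin P (g 0)) ≤ (Mfin P (g 0)).card * ((Mfin P (g 0)).card - 1) :=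
    Xc_le _
  have hb2 : 2 * (Mfin P (g 0)).card ≤ n := by
    rw [← hcard]
    exact card_Mfin (hg0 ▸ hM)
  have hb3 : (Mfin P (g 0)).card ≤ n / 2 := by omega
  have hb4 : (Mfin P (g 0)).card * ((Mfin P (g 0)).card - 1) ≤ (n / 2) * (n / 2 - 1) :=
    Nat.mul_le_mul hb3 (Nat.sub_le_sub_right hb3 1)
  rw [Nat.choose_two_right]
  rw [Nat.le_div_iff_mul_le (by norm_num : 0 < 2)]
  omega
end
end
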